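/- arXiv:1801.08931 — 3 statements merged into one kernel-verified Lean document; each statement's English description precedes it below -/
import Mathlib

section
/- (Talagrand's L¹–L² inequality) There is an absolute constant C > 0 such that for every n ≥ 1 and every function f : C_n → ℝ, Var_{μⁿ}(f) ≤ C · Σ_{i=1}^n ‖D_i f‖₂² / (1 + log(‖D_i f‖₂ / ‖D_i f‖₁)), with the convention that a summand is 0 when D_i f is identically 0. -/
open scoped Classical

/-- Expectation on the discrete cube `{-1,1}ⁿ ≃ (Fin n → Bool)` under the uniform measure. -/
noncomputable def EC {n : ℕ} (g : (Fin n → Bool) → ℝ) : ℝ :=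
  (∑ x : Fin n → Bool, g x) / 2 ^ n

/-- Variance on the discrete cube under the uniform measure. -/
noncomputable def varC {n : ℕ} (g : (Fin n → Bool) → ℝ) : ℝ :=
  EC (fun x => g x ^ 2) - (EC g) ^ 2

/-- `cubeFlip i x` is `x` with its `i`-th coordinate flipped. -/
def cubeFlip {n : ℕ} (i : Fin n) (x : Fin n → Bool) : Fin n → Bool :=
  Function.update x i (!x i)

/-- Discrete derivative along the `i`-th coordinate: `Dᵢ g (x) = g(τᵢ x) − g(x)`. -/
noncomputable def D {n : ℕ} (i : Fin n) (g : (Fin n → Bool) → ℝ) : (Fin n → Bool) → ℝ :=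
  fun x => g (cubeFlip i x) - g x

/-- `L^p(μⁿ)`-norm on the discrete cube. -/
noncomputable def normC {n : ℕ} (p : ℝ) (g : (Fin n → Bool) → ℝ) : ℝ :=
  (EC fun x => |g x| ^ p) ^ (1 / p)

/-!
In the Walsh basis, `Var f = ∑_i ∑_{S ∋ i} f̂(S)² / |S|`, and `D_i f` has coefficient `-2 f̂(S)` at
every `S ∋ i` and `0` elsewhere. So it suffices to bound `∑_S ĝ(S)² / |S|` for a single `g = D_i f`.
Bonami's inequality `‖T_{1/2} g‖₄ ≤ ‖g‖₂`, combined with Cauchy–Schwarz, gives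
`∑_S 2^{-|S|} ĝ(S)² ≤ ‖g‖₁^{1/2} ‖g‖₂^{3/2} = ‖g‖₂² e^{-t/2}` with `t = log(‖g‖₂/‖g‖₁)`: a small
`L¹` norm forces the Fourier mass of `g` onto high levels. Splitting the levels at `K ≈ t/4`, the
low levels are controlled by this decay and the high levels by `1/K` times Parseval.
-/

open Finset Real
open scoped symmDiff BigOperators

lemma sq_expect_mul_le_expect_mul_expect_mul_sq {ι : Type*} (s : Finset ι) {w : ι → ℝ}
    (hw : ∀ i ∈ s, 0 ≤ w i) (h : ι → ℝ) :
    (𝔼 i ∈ s, w i * h i) ^ 2 ≤ (𝔼 i ∈ s, w i) * 𝔼 i ∈ s, w i * h i ^ 2 := by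
  have hsq (i : ι) (hi : i ∈ s) : √(w i) ^ 2 = w i := sq_sqrt (hw i hi)
  calc (𝔼 i ∈ s, w i * h i) ^ 2 = (𝔼 i ∈ s, √(w i) * (√(w i) * h i)) ^ 2 := by
        congr 1
        exact expect_congr rfl fun i hi => by rw [← mul_assoc, ← sq, hsq i hi]
    _ ≤ (𝔼 i ∈ s, √(w i) ^ 2) * 𝔼 i ∈ s, (√(w i) * h i) ^ 2 := expect_mul_sq_le_sq_mul_sq ..
    _ = (𝔼 i ∈ s, w i) * 𝔼 i ∈ s, w i * h i ^ 2 := by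
        congr 1
        · exact expect_congr rfl hsq
        · exact expect_congr rfl fun i hi => by rw [mul_pow, hsq i hi]

lemma inv_natCast_le_two_pow_mul_half_pow_add_inv (c : ℕ) {K : ℕ} (hK : 0 < K) :
    (c : ℝ)⁻¹ ≤ 2 ^ K * (1 / 2) ^ c + (K : ℝ)⁻¹ := by
  have hK' : (0 : ℝ) < K := Nat.cast_pos.mpr hK
  rcases Nat.eq_zero_or_pos c with rfl | hc
  · simp only [Nat.cast_zero, inv_zero]; positivity
  rcases le_or_gt c K with hcK | hKc
  · have h1 : (1 : ℝ) ≤ 2 ^ K * (1 / 2) ^ c := by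
      rw [one_div_pow, mul_one_div, one_le_div (by positivity)]
      exact pow_le_pow_right₀ one_le_two hcK
    have h2 : (c : ℝ)⁻¹ ≤ 1 := inv_le_one_of_one_le₀ (Nat.one_le_cast.mpr hc)
    linarith [inv_pos.mpr hK']
  · have : (c : ℝ)⁻¹ ≤ (K : ℝ)⁻¹ := inv_anti₀ hK' (Nat.cast_le.mpr hKc.le)
    linarith [show (0 : ℝ) ≤ 2 ^ K * (1 / 2) ^ c by positivity]

lemma two_pow_floor_add_one_mul_exp_neg_le {t : ℝ} (ht : 0 ≤ t) :
    2 ^ (⌊t / 4⌋₊ + 1) * exp (-t / 2) ≤ 11 / (1 + t) := by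
  have hfloor : (⌊t / 4⌋₊ : ℝ) ≤ t / 4 := Nat.floor_le (by positivity)
  have h2 (k : ℕ) : (2 : ℝ) ^ k ≤ exp k := by
    rw [← mul_one (k : ℝ), exp_nat_mul]
    gcongr
    linarith [add_one_le_exp 1]
  have hquarter : 1 + t ≤ 4 * exp (t / 4) := by linarith [add_one_le_exp (t / 4)]
  calc 2 ^ (⌊t / 4⌋₊ + 1) * exp (-t / 2) ≤ exp (⌊t / 4⌋₊ + 1) * exp (-t / 2) := by
        rw [← Nat.cast_succ]; gcongr; exact h2 _
    _ ≤ exp 1 / exp (t / 4) := by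
        rw [← exp_add, ← exp_sub]; exact exp_le_exp.mpr (by linarith)
    _ ≤ 11 / (1 + t) := by
        rw [div_le_div_iff₀ (exp_pos _) (by linarith)]
        nlinarith [exp_one_lt_d9, exp_pos (t / 4)]

lemma inv_floor_add_one_le {t : ℝ} (ht : 0 ≤ t) : ((⌊t / 4⌋₊ + 1 : ℕ) : ℝ)⁻¹ ≤ 5 / (1 + t) := by
  have hlt : t / 4 < ⌊t / 4⌋₊ + 1 := Nat.lt_floor_add_one _
  rw [Nat.cast_succ, inv_le_iff_one_le_mul₀ (by positivity), div_mul_eq_mul_div,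
    le_div_iff₀ (by linarith)]
  nlinarith [(Nat.cast_nonneg _ : (0 : ℝ) ≤ ⌊t / 4⌋₊)]

/-- Split the levels at `K = ⌊t / 4⌋ + 1`: below `K` use the decay hypothesis, above `K` the
total mass. -/
lemma sum_div_le_of_sum_mul_half_pow_le {ι : Type*} (s : Finset ι) {b : ι → ℝ}
    (hb : ∀ a ∈ s, 0 ≤ b a) (c : ι → ℕ) {B t : ℝ} (ht : 0 ≤ t) (hmass : ∑ a ∈ s, b a ≤ B)
    (hdecay : ∑ a ∈ s, (1 / 2) ^ c a * b a ≤ B * exp (-t / 2)) :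
    ∑ a ∈ s, b a / c a ≤ 16 * (B / (1 + t)) := by
  set K := ⌊t / 4⌋₊ + 1
  have hK : 0 < K := Nat.succ_pos _
  have hB : 0 ≤ B := (sum_nonneg hb).trans hmass
  calc ∑ a ∈ s, b a / c a
      ≤ 2 ^ K * ∑ a ∈ s, (1 / 2) ^ c a * b a + (K : ℝ)⁻¹ * ∑ a ∈ s, b a := by
        rw [mul_sum, mul_sum, ← sum_add_distrib]
        refine sum_le_sum fun a ha => ?_
        have := mul_le_mul_of_nonneg_left
          (inv_natCast_le_two_pow_mul_half_pow_add_inv (c a) hK) (hb a ha)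
        rw [div_eq_mul_inv]
        linarith
    _ ≤ 2 ^ K * (B * exp (-t / 2)) + (K : ℝ)⁻¹ * B := by gcongr
    _ = (2 ^ K * exp (-t / 2) + (K : ℝ)⁻¹) * B := by ring
    _ ≤ (11 / (1 + t) + 5 / (1 + t)) * B := by
        gcongr
        exacts [two_pow_floor_add_one_mul_exp_neg_le ht, inv_floor_add_one_le ht]
    _ = 16 * (B / (1 + t)) := by ring

namespace Cube

variable {n : ℕ}

lemma EC_eq_expect (g : (Fin n → Bool) → ℝ) : EC g = 𝔼 x, g x := by
  simp [EC, Fintype.expect_eq_sum_div_card]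

/-- `Bool` encodes `{-1, 1}`: `sgn (x i)` is the `i`-th coordinate of `x` as a real number. -/
def sgn (b : Bool) : ℝ := if b then 1 else -1

lemma sgn_not (b : Bool) : sgn (!b) = -sgn b := by cases b <;> simp [sgn]

lemma sgn_mul_self (b : Bool) : sgn b * sgn b = 1 := by cases b <;> norm_num [sgn]

lemma cubeFlip_involutive (i : Fin n) : Function.Involutive (cubeFlip i) := by
  intro x
  simp [cubeFlip, Function.update_idem]

lemma cubeFlip_apply_self (i : Fin n) (x : Fin n → Bool) : cubeFlip i x i = !x i := by
  simp [cubeFlip]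

lemma cubeFlip_apply_of_ne {i j : Fin n} (h : j ≠ i) (x : Fin n → Bool) :
    cubeFlip i x j = x j := by
  simp [cubeFlip, Function.update_of_ne h]

lemma cubeFlip_comm {i j : Fin n} (h : i ≠ j) (x : Fin n → Bool) :
    cubeFlip i (cubeFlip j x) = cubeFlip j (cubeFlip i x) := by
  unfold cubeFlip
  rw [Function.update_of_ne h, Function.update_of_ne h.symm]
  exact Function.update_comm h.symm _ _ _

lemma expect_comp_cubeFlip (i : Fin n) (g : (Fin n → Bool) → ℝ) :
    𝔼 x, g (cubeFlip i x) = 𝔼 x, g x :=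
  Fintype.expect_equiv (cubeFlip_involutive i).toPerm _ _ fun _ => rfl

noncomputable def walsh (S : Finset (Fin n)) (x : Fin n → Bool) : ℝ :=
  ∏ j ∈ S, sgn (x j)

lemma walsh_empty (x : Fin n → Bool) : walsh ∅ x = 1 := by simp [walsh]

lemma walsh_singleton (i : Fin n) (x : Fin n → Bool) : walsh {i} x = sgn (x i) :=
  prod_singleton _ _

lemma walsh_cubeFlip (S : Finset (Fin n)) (i : Fin n) (x : Fin n → Bool) :
    walsh S (cubeFlip i x) = (if i ∈ S then -1 else 1) * walsh S x := by
  unfold walsh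
  split_ifs with h
  · rw [← mul_prod_erase _ _ h, ← mul_prod_erase _ _ h, cubeFlip_apply_self, sgn_not,
      prod_congr rfl fun j hj => by rw [cubeFlip_apply_of_ne (ne_of_mem_erase hj)]]
    ring
  · rw [one_mul]
    exact prod_congr rfl fun j hj => by rw [cubeFlip_apply_of_ne (by rintro rfl; exact h hj)]

lemma walsh_union {S T : Finset (Fin n)} (h : Disjoint S T) (x : Fin n → Bool) :
    walsh (S ∪ T) x = walsh S x * walsh T x :=
  prod_union h

lemma walsh_mul_walsh (S T : Finset (Fin n)) (x : Fin n → Bool) :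
    walsh S x * walsh T x = walsh (S ∆ T) x := by
  have hsq : walsh (S ∩ T) x * walsh (S ∩ T) x = 1 := by
    rw [walsh, ← prod_mul_distrib]
    exact prod_eq_one fun j _ => sgn_mul_self (x j)
  have split (A B : Finset (Fin n)) : walsh A x = walsh (A \ B) x * walsh (A ∩ B) x := by
    rw [← walsh_union (disjoint_sdiff_inter A B), sdiff_union_inter]
  rw [split S T, split T S, inter_comm T S, symmDiff_def, sup_eq_union,
    walsh_union disjoint_sdiff_sdiff]
  linear_combination (walsh (S \ T) x * walsh (T \ S) x) * hsq

lemma expect_walsh (S : Finset (Fin n)) : 𝔼 x, walsh S x = if S = ∅ then 1 else 0 := by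
  split_ifs with h
  · simp [h, walsh_empty]
  · obtain ⟨i, hi⟩ := nonempty_iff_ne_empty.mpr h
    have := expect_comp_cubeFlip i (walsh S)
    simp only [walsh_cubeFlip, if_pos hi, neg_one_mul, expect_neg_distrib] at this
    linarith

lemma expect_walsh_mul_walsh (S T : Finset (Fin n)) :
    𝔼 x, walsh S x * walsh T x = if S = T then 1 else 0 := by
  simp only [walsh_mul_walsh, expect_walsh, ← bot_eq_empty, symmDiff_eq_bot]

lemma sum_walsh_mul_walsh (x y : Fin n → Bool) :
    ∑ S : Finset (Fin n), walsh S x * walsh S y = if x = y then 2 ^ n else 0 := by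
  simp only [walsh, ← prod_mul_distrib]
  rw [← powerset_univ, ← prod_add_one]
  split_ifs with h
  · subst h
    simp [sgn_mul_self, one_add_one_eq_two]
  · obtain ⟨j, hj⟩ := Function.ne_iff.mp h
    refine prod_eq_zero (mem_univ j) ?_
    cases hx : x j <;> cases hy : y j <;> simp_all [sgn]

noncomputable def fourierCoeff (f : (Fin n → Bool) → ℝ) (S : Finset (Fin n)) : ℝ :=
  𝔼 x, f x * walsh S x

lemma fourierCoeff_add (f g : (Fin n → Bool) → ℝ) (S : Finset (Fin n)) :
    fourierCoeff (f + g) S = fourierCoeff f S + fourierCoeff g S := by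
  simp only [fourierCoeff, Pi.add_apply, add_mul, expect_add_distrib]

lemma fourierCoeff_zero (S : Finset (Fin n)) : fourierCoeff 0 S = 0 := by
  simp [fourierCoeff]

lemma fourierCoeff_empty (f : (Fin n → Bool) → ℝ) : fourierCoeff f ∅ = 𝔼 x, f x := by
  simp [fourierCoeff, walsh_empty]

lemma sum_fourierCoeff_mul_walsh (f : (Fin n → Bool) → ℝ) (y : Fin n → Bool) :
    ∑ S, fourierCoeff f S * walsh S y = f y := by
  simp_rw [fourierCoeff, expect_mul, ← expect_sum_comm, mul_assoc, ← mul_sum,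
    sum_walsh_mul_walsh, mul_ite, mul_zero, Fintype.expect_eq_sum_div_card, sum_ite_eq',
    mem_univ, if_true]
  simp

lemma sum_fourierCoeff_mul_fourierCoeff (f g : (Fin n → Bool) → ℝ) :
    ∑ S, fourierCoeff f S * fourierCoeff g S = 𝔼 x, f x * g x := by
  conv_rhs => enter [2, x]; rw [← sum_fourierCoeff_mul_walsh g x]
  simp_rw [mul_sum, expect_sum_comm]
  refine sum_congr rfl fun S _ => ?_
  rw [fourierCoeff, expect_mul]
  congr! 1 with x
  ring

lemma fourierCoeff_comp_cubeFlip (f : (Fin n → Bool) → ℝ) (i : Fin n) (S : Finset (Fin n)) :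
    fourierCoeff (fun x => f (cubeFlip i x)) S = (if i ∈ S then -1 else 1) * fourierCoeff f S := by
  rw [fourierCoeff, ← expect_comp_cubeFlip i]
  simp only [(cubeFlip_involutive i) _, walsh_cubeFlip, fourierCoeff, mul_expect]
  congr! 1 with x; ring

lemma fourierCoeff_D (f : (Fin n → Bool) → ℝ) (i : Fin n) (S : Finset (Fin n)) :
    fourierCoeff (D i f) S = if i ∈ S then -2 * fourierCoeff f S else 0 := by
  have hsub : fourierCoeff (D i f) S =
      fourierCoeff (fun x => f (cubeFlip i x)) S - fourierCoeff f S := by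
    simp only [fourierCoeff, D, sub_mul, expect_sub_distrib]
  rw [hsub, fourierCoeff_comp_cubeFlip]
  split_ifs <;> ring

def FlipInvariant (i : Fin n) (f : (Fin n → Bool) → ℝ) : Prop :=
  ∀ x, f (cubeFlip i x) = f x

variable {i : Fin n} {f g : (Fin n → Bool) → ℝ}

lemma FlipInvariant.fourierCoeff_eq_zero (h : FlipInvariant i f) {S : Finset (Fin n)}
    (hi : i ∈ S) : fourierCoeff f S = 0 := by
  have := fourierCoeff_comp_cubeFlip f i S
  simp only [h _, if_pos hi] at this
  linarith

lemma FlipInvariant.expect_sgn_mul_eq_zero (h : FlipInvariant i f) :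
    𝔼 x, sgn (x i) * f x = 0 := by
  have := expect_comp_cubeFlip i fun x => sgn (x i) * f x
  simp only [cubeFlip_apply_self, sgn_not, h _, neg_mul, expect_neg_distrib] at this
  linarith

lemma fourierCoeff_sgn_mul (g : (Fin n → Bool) → ℝ) (i : Fin n) (S : Finset (Fin n)) :
    fourierCoeff (fun x => sgn (x i) * g x) S = fourierCoeff g ({i} ∆ S) := by
  unfold fourierCoeff
  congr! 1 with x
  rw [← walsh_mul_walsh, walsh_singleton]
  ring

noncomputable def noise (σ : ℝ) (f : (Fin n → Bool) → ℝ) (x : Fin n → Bool) : ℝ :=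
  ∑ S, σ ^ S.card * fourierCoeff f S * walsh S x

lemma fourierCoeff_noise (σ : ℝ) (f : (Fin n → Bool) → ℝ) (S : Finset (Fin n)) :
    fourierCoeff (noise σ f) S = σ ^ S.card * fourierCoeff f S := by
  simp_rw [fourierCoeff, noise, sum_mul, expect_sum_comm, mul_assoc, ← mul_expect,
    expect_walsh_mul_walsh, mul_ite, mul_one, mul_zero, sum_ite_eq', mem_univ, if_true]
  rfl

lemma expect_mul_noise (σ : ℝ) (g : (Fin n → Bool) → ℝ) :
    𝔼 x, g x * noise σ g x = ∑ S, σ ^ S.card * fourierCoeff g S ^ 2 := by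
  rw [← sum_fourierCoeff_mul_fourierCoeff]
  exact sum_congr rfl fun S _ => by rw [fourierCoeff_noise]; ring

lemma noise_add (σ : ℝ) (f g : (Fin n → Bool) → ℝ) :
    noise σ (f + g) = noise σ f + noise σ g := by
  ext x
  simp only [noise, fourierCoeff_add, Pi.add_apply, ← sum_add_distrib]
  exact sum_congr rfl fun S _ => by ring

lemma FlipInvariant.noise (h : FlipInvariant i f) (σ : ℝ) : FlipInvariant i (noise σ f) := by
  intro x
  refine sum_congr rfl fun S _ => ?_
  by_cases hi : i ∈ S
  · rw [h.fourierCoeff_eq_zero hi]; ring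
  · rw [walsh_cubeFlip, if_neg hi, one_mul]

lemma noise_sgn_mul (h : FlipInvariant i g) (σ : ℝ) (x : Fin n → Bool) :
    noise σ (fun y => sgn (y i) * g y) x = σ * (sgn (x i) * noise σ g x) := by
  simp only [noise, fourierCoeff_sgn_mul, mul_sum]
  refine Fintype.sum_equiv (symmDiff_right_involutive {i}).toPerm _ _ fun S => ?_
  simp only [Function.Involutive.coe_toPerm]
  rw [← walsh_mul_walsh, walsh_singleton]
  by_cases hi : i ∈ S
  · rw [symmDiff_of_le (singleton_subset_iff.mpr hi), sdiff_singleton_eq_erase,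
      ← card_erase_add_one hi, pow_succ]
    linear_combination (-(σ ^ #(S.erase i) * σ * fourierCoeff g (S.erase i) * walsh S x)) *
      sgn_mul_self (x i)
  · rw [h.fourierCoeff_eq_zero (mem_symmDiff.mpr (Or.inl ⟨mem_singleton_self i, hi⟩))]
    ring

lemma noise_one (f : (Fin n → Bool) → ℝ) : noise 1 f = f := by
  ext x
  simp [noise, sum_fourierCoeff_mul_walsh]

lemma noise_eq_fourierCoeff_empty (h : ∀ i, FlipInvariant i f) (σ : ℝ) (x : Fin n → Bool) :
    noise σ f x = fourierCoeff f ∅ := by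
  rw [noise, sum_eq_single ∅ (fun S _ hS => ?_) (by simp)]
  · simp [walsh_empty]
  · obtain ⟨i, hi⟩ := nonempty_iff_ne_empty.mpr hS
    rw [(h i).fourierCoeff_eq_zero hi]; ring

noncomputable def evenPart (i : Fin n) (f : (Fin n → Bool) → ℝ) (x : Fin n → Bool) : ℝ :=
  (f x + f (cubeFlip i x)) / 2

noncomputable def oddPart (i : Fin n) (f : (Fin n → Bool) → ℝ) (x : Fin n → Bool) : ℝ :=
  sgn (x i) * (f x - f (cubeFlip i x)) / 2

lemma evenPart_add_sgn_mul_oddPart (i : Fin n) (f : (Fin n → Bool) → ℝ) :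
    (fun x => evenPart i f x + sgn (x i) * oddPart i f x) = f := by
  ext x
  unfold evenPart oddPart
  linear_combination (f x - f (cubeFlip i x)) / 2 * sgn_mul_self (x i)

lemma flipInvariant_evenPart (i : Fin n) (f : (Fin n → Bool) → ℝ) :
    FlipInvariant i (evenPart i f) := by
  intro x
  simp only [evenPart, cubeFlip_involutive i x]
  ring

lemma flipInvariant_oddPart (i : Fin n) (f : (Fin n → Bool) → ℝ) :
    FlipInvariant i (oddPart i f) := by
  intro x
  simp only [oddPart, cubeFlip_involutive i x, cubeFlip_apply_self, sgn_not]
  ring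

lemma FlipInvariant.evenPart {j : Fin n} (h : FlipInvariant j f) (hji : j ≠ i) :
    FlipInvariant j (evenPart i f) := by
  intro x
  simp only [Cube.evenPart, cubeFlip_comm hji.symm, h _]

lemma FlipInvariant.oddPart {j : Fin n} (h : FlipInvariant j f) (hji : j ≠ i) :
    FlipInvariant j (oddPart i f) := by
  intro x
  simp only [Cube.oddPart, cubeFlip_comm hji.symm, h _, cubeFlip_apply_of_ne hji.symm]

section Moments

variable {A B : (Fin n → Bool) → ℝ}

lemma FlipInvariant.expect_add_sgn_mul (h : FlipInvariant i g) (f : (Fin n → Bool) → ℝ) :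
    𝔼 x, (f x + sgn (x i) * g x) = 𝔼 x, f x := by
  rw [expect_add_distrib, h.expect_sgn_mul_eq_zero, add_zero]

lemma expect_add_sgn_mul_sq (hA : FlipInvariant i A) (hB : FlipInvariant i B) :
    𝔼 x, (A x + sgn (x i) * B x) ^ 2 = 𝔼 x, A x ^ 2 + 𝔼 x, B x ^ 2 := by
  have hodd : FlipInvariant i fun x => 2 * A x * B x := fun x => by simp only [hA x, hB x]
  rw [← expect_add_distrib, ← hodd.expect_add_sgn_mul fun x => A x ^ 2 + B x ^ 2]
  congr! 1 with x
  linear_combination B x ^ 2 * sgn_mul_self (x i)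

lemma expect_add_sgn_mul_pow_four (hA : FlipInvariant i A) (hB : FlipInvariant i B) (c : ℝ) :
    𝔼 x, (A x + c * (sgn (x i) * B x)) ^ 4 =
      𝔼 x, A x ^ 4 + 6 * c ^ 2 * 𝔼 x, A x ^ 2 * B x ^ 2 + c ^ 4 * 𝔼 x, B x ^ 4 := by
  have hodd : FlipInvariant i fun x => 4 * c * A x ^ 3 * B x + 4 * c ^ 3 * A x * B x ^ 3 :=
    fun x => by simp only [hA x, hB x]
  rw [mul_expect, mul_expect, ← expect_add_distrib, ← expect_add_distrib,
    ← hodd.expect_add_sgn_mul fun x => A x ^ 4 + 6 * c ^ 2 * (A x ^ 2 * B x ^ 2) + c ^ 4 * B x ^ 4]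
  congr! 1 with x
  have hs := sgn_mul_self (x i)
  linear_combination (6 * c ^ 2 * A x ^ 2 * B x ^ 2 + 4 * c ^ 3 * A x * B x ^ 3 * sgn (x i) +
    c ^ 4 * B x ^ 4 * (sgn (x i) * sgn (x i) + 1)) * hs

end Moments

lemma noise_eq_noise_evenPart_add (σ : ℝ) (i : Fin n) (f : (Fin n → Bool) → ℝ) (x : Fin n → Bool) :
    noise σ f x = noise σ (evenPart i f) x + σ * (sgn (x i) * noise σ (oddPart i f) x) := by
  conv_lhs => rw [← evenPart_add_sgn_mul_oddPart i f]
  rw [show (fun x => evenPart i f x + sgn (x i) * oddPart i f x) =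
      evenPart i f + fun x => sgn (x i) * oddPart i f x from rfl, noise_add, Pi.add_apply,
    noise_sgn_mul (flipInvariant_oddPart i f)]

lemma expect_noise_pow_four_le_of_parts {σ : ℝ} (hσ : σ ^ 2 ≤ 1 / 3) (i : Fin n)
    (f : (Fin n → Bool) → ℝ)
    (heven : 𝔼 x, noise σ (evenPart i f) x ^ 4 ≤ (𝔼 x, evenPart i f x ^ 2) ^ 2)
    (hodd : 𝔼 x, noise σ (oddPart i f) x ^ 4 ≤ (𝔼 x, oddPart i f x ^ 2) ^ 2) :
    𝔼 x, noise σ f x ^ 4 ≤ (𝔼 x, f x ^ 2) ^ 2 := by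
  set A := noise σ (evenPart i f)
  set B := noise σ (oddPart i f)
  set E := 𝔼 x, evenPart i f x ^ 2
  set O := 𝔼 x, oddPart i f x ^ 2
  have hE : 0 ≤ E := expect_nonneg fun x _ => sq_nonneg _
  have hO : 0 ≤ O := expect_nonneg fun x _ => sq_nonneg _
  have hmixed : 𝔼 x, A x ^ 2 * B x ^ 2 ≤ E * O := by
    have hcs := expect_mul_sq_le_sq_mul_sq univ (fun x => A x ^ 2) (fun x => B x ^ 2)
    simp only [← pow_mul] at hcs
    refine (pow_le_pow_iff_left₀ (expect_nonneg fun x _ => by positivity)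
      (mul_nonneg hE hO) two_ne_zero).mp ?_
    calc _ ≤ (𝔼 x, A x ^ 4) * 𝔼 x, B x ^ 4 := hcs
      _ ≤ E ^ 2 * O ^ 2 := mul_le_mul heven hodd (expect_nonneg fun x _ => by positivity)
          (by positivity)
      _ = (E * O) ^ 2 := by ring
  have hf : 𝔼 x, f x ^ 2 = E + O := by
    conv_lhs => rw [← evenPart_add_sgn_mul_oddPart i f]
    exact expect_add_sgn_mul_sq (flipInvariant_evenPart i f) (flipInvariant_oddPart i f)
  calc 𝔼 x, noise σ f x ^ 4
      = 𝔼 x, A x ^ 4 + 6 * σ ^ 2 * 𝔼 x, A x ^ 2 * B x ^ 2 + σ ^ 4 * 𝔼 x, B x ^ 4 := by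
        simp only [noise_eq_noise_evenPart_add σ i f]
        exact expect_add_sgn_mul_pow_four ((flipInvariant_evenPart i f).noise σ)
          ((flipInvariant_oddPart i f).noise σ) σ
    _ ≤ E ^ 2 + 6 * σ ^ 2 * (E * O) + σ ^ 4 * O ^ 2 := by gcongr
    _ ≤ (E + O) ^ 2 := by
        have hσ4 : σ ^ 4 ≤ 1 := by nlinarith [sq_nonneg σ]
        nlinarith [mul_le_mul_of_nonneg_right (show 6 * σ ^ 2 ≤ 2 by linarith) (mul_nonneg hE hO),
          mul_le_mul_of_nonneg_right hσ4 (sq_nonneg O)]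
    _ = (𝔼 x, f x ^ 2) ^ 2 := by rw [hf]

lemma expect_noise_pow_four_le_of_flipInvariant {σ : ℝ} (hσ : σ ^ 2 ≤ 1 / 3)
    (J : Finset (Fin n)) (f : (Fin n → Bool) → ℝ) (hf : ∀ j ∉ J, FlipInvariant j f) :
    𝔼 x, noise σ f x ^ 4 ≤ (𝔼 x, f x ^ 2) ^ 2 := by
  induction J using Finset.induction_on generalizing f with
  | empty =>
    have hinv (j : Fin n) : FlipInvariant j f := hf j (notMem_empty j)
    have hconst (x : Fin n → Bool) : f x = fourierCoeff f ∅ := by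
      rw [← noise_eq_fourierCoeff_empty hinv 1 x, noise_one]
    simp [noise_eq_fourierCoeff_empty hinv, hconst, ← pow_mul]
  | insert i J _ ih =>
    have hJ (j : Fin n) (hj : j ∉ J) (hji : j ≠ i) : FlipInvariant j f := hf j (by simp [hji, hj])
    refine expect_noise_pow_four_le_of_parts hσ i f (ih _ fun j hj => ?_) (ih _ fun j hj => ?_)
    · obtain rfl | hji := eq_or_ne j i
      exacts [flipInvariant_evenPart j f, (hJ j hj hji).evenPart hji]
    · obtain rfl | hji := eq_or_ne j i
      exacts [flipInvariant_oddPart j f, (hJ j hj hji).oddPart hji]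

/-- Bonami's hypercontractive inequality `‖T_σ f‖₄ ≤ ‖f‖₂`. -/
theorem expect_noise_pow_four_le {σ : ℝ} (hσ : σ ^ 2 ≤ 1 / 3) (f : (Fin n → Bool) → ℝ) :
    𝔼 x, noise σ f x ^ 4 ≤ (𝔼 x, f x ^ 2) ^ 2 :=
  expect_noise_pow_four_le_of_flipInvariant hσ univ f fun j hj => absurd (mem_univ j) hj

lemma sum_half_pow_card_mul_fourierCoeff_sq_pow_four_le (g : (Fin n → Bool) → ℝ) :
    (∑ S, (1 / 2 : ℝ) ^ S.card * fourierCoeff g S ^ 2) ^ 4 ≤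
      (𝔼 x, |g x|) ^ 2 * (𝔼 x, g x ^ 2) ^ 3 := by
  set T := noise (1 / 2) g
  have hX : 0 ≤ ∑ S, (1 / 2 : ℝ) ^ S.card * fourierCoeff g S ^ 2 := by positivity
  have hgT : ∑ S, (1 / 2 : ℝ) ^ S.card * fourierCoeff g S ^ 2 ≤ 𝔼 x, |g x| * |T x| := by
    rw [← expect_mul_noise]
    exact expect_le_expect fun x _ => abs_mul (g x) (T x) ▸ le_abs_self _
  have hweighted : (𝔼 x, |g x| * |T x|) ^ 2 ≤ (𝔼 x, |g x|) * 𝔼 x, |g x| * T x ^ 2 := by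
    simpa only [sq_abs] using
      sq_expect_mul_le_expect_mul_expect_mul_sq univ (fun x _ => abs_nonneg (g x)) fun x => |T x|
  have hcs : (𝔼 x, |g x| * T x ^ 2) ^ 2 ≤ (𝔼 x, g x ^ 2) * (𝔼 x, g x ^ 2) ^ 2 := by
    have := expect_mul_sq_le_sq_mul_sq univ (fun x => |g x|) fun x => T x ^ 2
    simp only [sq_abs, ← pow_mul] at this
    exact this.trans (mul_le_mul_of_nonneg_left (expect_noise_pow_four_le (by norm_num) g)
      (expect_nonneg fun x _ => sq_nonneg _))
  calc (∑ S, (1 / 2 : ℝ) ^ S.card * fourierCoeff g S ^ 2) ^ 4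
      ≤ ((𝔼 x, |g x| * |T x|) ^ 2) ^ 2 := by rw [← pow_mul]; gcongr
    _ ≤ ((𝔼 x, |g x|) * 𝔼 x, |g x| * T x ^ 2) ^ 2 := by
        gcongr
    _ = (𝔼 x, |g x|) ^ 2 * (𝔼 x, |g x| * T x ^ 2) ^ 2 := mul_pow _ _ _
    _ ≤ (𝔼 x, |g x|) ^ 2 * (𝔼 x, g x ^ 2) ^ 3 := by
        rw [← pow_succ'] at hcs
        gcongr

lemma normC_two (g : (Fin n → Bool) → ℝ) : normC 2 g = √(𝔼 x, g x ^ 2) := by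
  simp_rw [normC, EC_eq_expect, sqrt_eq_rpow, one_div, ← sq_abs (g _)]
  norm_cast

lemma normC_one (g : (Fin n → Bool) → ℝ) : normC 1 g = 𝔼 x, |g x| := by
  simp [normC, EC_eq_expect]

lemma sum_fourierCoeff_sq (g : (Fin n → Bool) → ℝ) :
    ∑ S, fourierCoeff g S ^ 2 = 𝔼 x, g x ^ 2 := by
  simp_rw [sq, sum_fourierCoeff_mul_fourierCoeff]

-- The `S = ∅` summand is `0` by the convention `x / 0 = 0`.
lemma sum_fourierCoeff_sq_div_card_le (g : (Fin n → Bool) → ℝ) :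
    ∑ S, fourierCoeff g S ^ 2 / S.card ≤
      16 * (normC 2 g ^ 2 / (1 + log (normC 2 g / normC 1 g))) := by
  have hQ : 0 ≤ 𝔼 x, g x ^ 2 := expect_nonneg fun x _ => sq_nonneg _
  rw [normC_two, normC_one, sq_sqrt hQ]
  set Q := 𝔼 x, g x ^ 2
  set L := 𝔼 x, |g x|
  rcases (expect_nonneg fun x _ => abs_nonneg (g x) : 0 ≤ L).eq_or_lt with hL | hL
  · have hg (x : Fin n → Bool) : g x = 0 := by
      have := congrFun ((Fintype.expect_eq_zero_iff_of_nonneg fun x => abs_nonneg (g x)).mp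
        hL.symm) x
      simpa using this
    simp [Q, hg, fourierCoeff]
  have hLM : L ≤ √Q := by
    refine le_sqrt_of_sq_le ?_
    simpa [sq_abs] using expect_mul_sq_le_sq_mul_sq univ (fun x => |g x|) fun _ => (1 : ℝ)
  set t := log (√Q / L)
  have ht : 0 ≤ t := log_nonneg ((one_le_div hL).mpr hLM)
  refine sum_div_le_of_sum_mul_half_pow_le univ (fun S _ => sq_nonneg _) _ ht
    (sum_fourierCoeff_sq g).le ?_
  have hQpos : 0 < Q := sqrt_pos.mp (hL.trans_le hLM)
  have hexp : exp (-t / 2) ^ 4 = L ^ 2 / Q := by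
    calc exp (-t / 2) ^ 4 = (exp t ^ 2)⁻¹ := by
          rw [← exp_nat_mul, ← exp_nat_mul, ← exp_neg]; congr 1; push_cast; ring
      _ = L ^ 2 / Q := by
          rw [exp_log (div_pos (hL.trans_le hLM) hL), div_pow, sq_sqrt hQ, inv_div]
  refine (pow_le_pow_iff_left₀ (by positivity) (by positivity) four_ne_zero).mp ?_
  calc _ ≤ L ^ 2 * Q ^ 3 := sum_half_pow_card_mul_fourierCoeff_sq_pow_four_le g
    _ = (Q * exp (-t / 2)) ^ 4 := by
        rw [mul_pow, hexp]
        field_simp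

lemma varC_eq_sum_fourierCoeff_sq (f : (Fin n → Bool) → ℝ) :
    varC f = ∑ S ∈ univ.erase ∅, fourierCoeff f S ^ 2 := by
  rw [varC, EC_eq_expect, EC_eq_expect, ← sum_fourierCoeff_sq, ← fourierCoeff_empty,
    ← add_sum_erase _ _ (mem_univ ∅), add_sub_cancel_left]

lemma sum_sum_fourierCoeff_D_sq_div_card (f : (Fin n → Bool) → ℝ) :
    ∑ i, ∑ S, fourierCoeff (D i f) S ^ 2 / S.card = 4 * varC f := by
  simp_rw [fourierCoeff_D, ite_pow, ite_div, zero_pow two_ne_zero, zero_div]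
  rw [sum_comm]
  simp only [sum_ite_mem, univ_inter, sum_const, nsmul_eq_mul]
  rw [varC_eq_sum_fourierCoeff_sq, mul_sum, ← add_sum_erase _ _ (mem_univ ∅), card_empty,
    Nat.cast_zero, zero_mul, zero_add]
  refine sum_congr rfl fun S hS => ?_
  have : (S.card : ℝ) ≠ 0 := by simpa using ne_of_mem_erase hS
  field_simp
  ring

end Cube

/-- Talagrand's L¹–L² inequality on the discrete cube. -/
theorem talagrand_L1_L2 :
    ∃ C : ℝ, 0 < C ∧ ∀ n : ℕ, 1 ≤ n → ∀ f : (Fin n → Bool) → ℝ,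
      varC f ≤ C * ∑ i : Fin n,
        if D i f = 0 then 0 else
          (normC 2 (D i f)) ^ 2 /
            (1 + Real.log (normC 2 (D i f) / normC 1 (D i f))) := by
  refine ⟨4, four_pos, fun n _ f => ?_⟩
  have hterm (i : Fin n) : ∑ S, Cube.fourierCoeff (D i f) S ^ 2 / S.card ≤
      16 * if D i f = 0 then 0 else
        normC 2 (D i f) ^ 2 / (1 + log (normC 2 (D i f) / normC 1 (D i f))) := by
    split_ifs with h
    · simp [h, Cube.fourierCoeff_zero]
    · exact Cube.sum_fourierCoeff_sq_div_card_le _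
  calc varC f = (∑ i, ∑ S, Cube.fourierCoeff (D i f) S ^ 2 / S.card) / 4 := by
        rw [Cube.sum_sum_fourierCoeff_D_sq_div_card]; ring
    _ ≤ (∑ i : Fin n, 16 * if D i f = 0 then 0 else
          normC 2 (D i f) ^ 2 / (1 + log (normC 2 (D i f) / normC 1 (D i f)))) / 4 := by
        gcongr with i; exact hterm i
    _ = _ := by rw [← mul_sum]; ring
end

section
/- (Second-order Talagrand inequality on the discrete cube) Fix 0 < s₀ < 1/128. There is a constant C > 0, independent of n and f (depending at most on s₀), such that for every n ≥ 1 and every Boolean function f : C_n → {0,1}: Var_{μⁿ}(f) ≤ C · ( Σ_{i=1}^n ‖D_i f‖_{1+e^{−2s₀}}² + Σ_{i≠j, i,j=1}^n ‖D_{ij} f‖₂² / [1 + log(‖D_{ij} f‖₂ / ‖D_{ij} f‖₁)]² ), with the convention that a summand in the second sum is 0 when D_{ij} f is identically 0. -/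
open scoped Classical

/-!
In the Walsh basis `Var f = ∑_{S ≠ ∅} f̂(S)²`, and `D_i`, `D_{ij}` multiply `f̂(S)` by `-2·[i ∈ S]`
and `4·[i, j ∈ S]`. So the Fourier mass of `f` in degrees `1, 2` is a quarter of
`∑_i ∑_{|S| ≤ 2} (D_i f)^(S)²`, and the mass in degrees `≥ 3` is a sixteenth of the sum over
`i ≠ j` of the tails `∑_{|S| ≥ 3} (D_{ij} f)^(S)² / (|S| (|S| - 1))`.

By Bonami's lemma and Cauchy–Schwarz, the Fourier mass of any `g` up to degree `k` is at most
`3^k ‖g‖₁ ‖g‖₂`. Since `D_i f` takes values in `{-1, 0, 1}`, `‖D_i f‖₁ ‖D_i f‖₂ ≤ ‖D_i f‖_p²` for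
`p ≥ 4/3`, in particular for `p = 1 + e^{-2s₀}`. For a tail, splitting at a degree
`k ≈ log (‖g‖₂ / ‖g‖₁) / 4` bounds the part below `k` by `3^k ‖g‖₁ ‖g‖₂` and the part above by
`‖g‖₂² / k²`, both `O(‖g‖₂² / (1 + log (‖g‖₂ / ‖g‖₁))²)`.
-/

open scoped BigOperators in
lemma Finset.sq_expect_le_expect_mul_expect {ι : Type*} (s : Finset ι) {r f g : ι → ℝ}
    (hf : ∀ i ∈ s, 0 ≤ f i) (hg : ∀ i ∈ s, 0 ≤ g i) (h : ∀ i ∈ s, r i ^ 2 ≤ f i * g i) :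
    (𝔼 i ∈ s, r i) ^ 2 ≤ (𝔼 i ∈ s, f i) * 𝔼 i ∈ s, g i := by
  simp only [Finset.expect_eq_sum_div_card, div_pow, div_mul_div_comm, ← sq]
  gcongr
  exact Finset.sum_sq_le_sum_mul_sum_of_sq_le_mul s hf hg h

namespace BooleanCube

open Finset
open scoped BigOperators

variable {n : ℕ}

lemma EC_eq_expect (g : (Fin n → Bool) → ℝ) : EC g = 𝔼 x, g x := by
  simp [EC, Fintype.expect_eq_sum_div_card]

lemma cubeFlip_apply_self (i : Fin n) (x : Fin n → Bool) : cubeFlip i x i = !x i := by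
  simp [cubeFlip]

lemma cubeFlip_apply_of_ne {i j : Fin n} (h : j ≠ i) (x : Fin n → Bool) :
    cubeFlip i x j = x j := by
  simp [cubeFlip, h]

lemma cubeFlip_involutive (i : Fin n) : Function.Involutive (cubeFlip i) := by
  intro x
  ext j
  rcases eq_or_ne j i with rfl | h
  · simp [cubeFlip_apply_self]
  · simp [cubeFlip_apply_of_ne h]

lemma expect_comp_cubeFlip (i : Fin n) (F : (Fin n → Bool) → ℝ) :
    𝔼 x, F (cubeFlip i x) = 𝔼 x, F x :=
  Fintype.expect_equiv (cubeFlip_involutive i).toPerm _ _ fun _ => rfl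

lemma expect_eq_zero_of_cubeFlip_eq_neg {i : Fin n} {F : (Fin n → Bool) → ℝ}
    (hF : ∀ x, F (cubeFlip i x) = -F x) : 𝔼 x, F x = 0 := by
  have h := expect_comp_cubeFlip i F
  simp only [hF, expect_neg_distrib] at h
  linarith

def spin (b : Bool) : ℝ := if b then 1 else -1

@[simp] lemma spin_not (b : Bool) : spin (!b) = -spin b := by cases b <;> simp [spin]

@[simp] lemma spin_mul_self (b : Bool) : spin b * spin b = 1 := by cases b <;> simp [spin]

def walsh (S : Finset (Fin n)) (x : Fin n → Bool) : ℝ := ∏ i ∈ S, spin (x i)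

lemma walsh_mul_self (S : Finset (Fin n)) (x : Fin n → Bool) : walsh S x * walsh S x = 1 := by
  simp [walsh, ← prod_mul_distrib]

lemma walsh_insert {i : Fin n} {S : Finset (Fin n)} (hi : i ∉ S) (x : Fin n → Bool) :
    walsh (insert i S) x = spin (x i) * walsh S x :=
  prod_insert hi

lemma walsh_cubeFlip_of_notMem {i : Fin n} {S : Finset (Fin n)} (hi : i ∉ S)
    (x : Fin n → Bool) : walsh S (cubeFlip i x) = walsh S x :=
  prod_congr rfl fun j hj => by rw [cubeFlip_apply_of_ne (ne_of_mem_of_not_mem hj hi)]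

lemma walsh_cubeFlip_of_mem {i : Fin n} {S : Finset (Fin n)} (hi : i ∈ S)
    (x : Fin n → Bool) : walsh S (cubeFlip i x) = -walsh S x := by
  rw [← insert_erase hi, walsh_insert (notMem_erase i S), walsh_insert (notMem_erase i S),
    walsh_cubeFlip_of_notMem (notMem_erase i S), cubeFlip_apply_self, spin_not, neg_mul]

lemma walsh_cubeFlip (i : Fin n) (S : Finset (Fin n)) (x : Fin n → Bool) :
    walsh S (cubeFlip i x) = (if i ∈ S then -1 else 1) * walsh S x := by
  split_ifs with hi
  · simp [walsh_cubeFlip_of_mem hi]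
  · simp [walsh_cubeFlip_of_notMem hi]

/-- Flipping a coordinate in `S ∆ T` changes the sign of the integrand. -/
lemma expect_walsh_mul_walsh (S T : Finset (Fin n)) :
    𝔼 x, walsh S x * walsh T x = if S = T then 1 else 0 := by
  split_ifs with h
  · simp [h, walsh_mul_self]
  · obtain ⟨i, hi⟩ : ∃ i, ¬(i ∈ S ↔ i ∈ T) := by
      by_contra! hc
      exact h (Finset.ext hc)
    refine expect_eq_zero_of_cubeFlip_eq_neg (i := i) fun x => ?_
    rw [walsh_cubeFlip, walsh_cubeFlip]
    by_cases hS : i ∈ S <;> by_cases hT : i ∈ T <;> simp_all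

lemma sum_walsh_mul_walsh (x y : Fin n → Bool) :
    ∑ S : Finset (Fin n), walsh S x * walsh S y = if x = y then 2 ^ n else 0 := by
  simp_rw [walsh, ← prod_mul_distrib, ← powerset_univ, ← prod_one_add]
  split_ifs with h
  · simp [h, one_add_one_eq_two]
  · obtain ⟨i, hi⟩ := Function.ne_iff.mp h
    refine prod_eq_zero (mem_univ i) ?_
    cases hx : x i <;> cases hy : y i <;> simp_all [spin]

noncomputable def walshCoeff (g : (Fin n → Bool) → ℝ) (S : Finset (Fin n)) : ℝ :=
  𝔼 x, g x * walsh S x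

def walshPoly (J : Finset (Fin n)) (c : Finset (Fin n) → ℝ) (x : Fin n → Bool) : ℝ :=
  ∑ S ∈ J.powerset, c S * walsh S x

lemma walshPoly_walshCoeff (g : (Fin n → Bool) → ℝ) : walshPoly univ (walshCoeff g) = g := by
  ext x
  have hcard : (Fintype.card (Fin n → Bool) : ℝ) = 2 ^ n := by simp
  simp only [walshPoly, walshCoeff, powerset_univ, Fintype.expect_eq_sum_div_card, hcard,
    div_mul_eq_mul_div, sum_mul, ← sum_div]
  rw [sum_comm]
  simp_rw [mul_assoc, ← mul_sum, sum_walsh_mul_walsh, mul_ite, mul_zero, sum_ite_eq',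
    if_pos (mem_univ _)]
  field_simp

lemma expect_mul_walshPoly (g : (Fin n → Bool) → ℝ) (J : Finset (Fin n))
    (c : Finset (Fin n) → ℝ) :
    𝔼 x, g x * walshPoly J c x = ∑ S ∈ J.powerset, c S * walshCoeff g S := by
  simp only [walshPoly, walshCoeff, mul_sum, mul_expect]
  rw [expect_sum_comm]
  refine sum_congr rfl fun S _ => expect_congr rfl fun x _ => by ring

lemma walshCoeff_walshPoly {J S : Finset (Fin n)} (hS : S ∈ J.powerset)
    (c : Finset (Fin n) → ℝ) : walshCoeff (walshPoly J c) S = c S := by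
  simp only [walshCoeff, walshPoly, sum_mul, mul_assoc]
  rw [expect_sum_comm]
  simp_rw [← mul_expect, expect_walsh_mul_walsh, mul_ite, mul_one, mul_zero, sum_ite_eq',
    if_pos hS]

lemma expect_walshPoly_sq (J : Finset (Fin n)) (c : Finset (Fin n) → ℝ) :
    𝔼 x, walshPoly J c x ^ 2 = ∑ S ∈ J.powerset, c S ^ 2 := by
  simp_rw [sq, expect_mul_walshPoly]
  exact sum_congr rfl fun S hS => by rw [walshCoeff_walshPoly hS]

theorem expect_sq_eq_sum_walshCoeff_sq (g : (Fin n → Bool) → ℝ) :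
    𝔼 x, g x ^ 2 = ∑ S, walshCoeff g S ^ 2 := by
  conv_lhs => rw [← walshPoly_walshCoeff g]
  rw [expect_walshPoly_sq, powerset_univ]

lemma walshCoeff_empty (g : (Fin n → Bool) → ℝ) : walshCoeff g ∅ = 𝔼 x, g x := by
  simp [walshCoeff, walsh]

theorem varC_eq_sum_walshCoeff_sq (g : (Fin n → Bool) → ℝ) :
    varC g = ∑ S ∈ univ.erase ∅, walshCoeff g S ^ 2 := by
  rw [varC, EC_eq_expect, EC_eq_expect, expect_sq_eq_sum_walshCoeff_sq, ← walshCoeff_empty,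
    ← add_sum_erase univ _ (mem_univ ∅)]
  ring

lemma walshCoeff_D (i : Fin n) (g : (Fin n → Bool) → ℝ) (S : Finset (Fin n)) :
    walshCoeff (D i g) S = if i ∈ S then -2 * walshCoeff g S else 0 := by
  have hflip : 𝔼 x, g (cubeFlip i x) * walsh S x
      = (if i ∈ S then -1 else 1) * walshCoeff g S := by
    rw [← expect_comp_cubeFlip i, walshCoeff, mul_expect]
    refine expect_congr rfl fun x _ => ?_
    rw [cubeFlip_involutive i x, walsh_cubeFlip]
    ring
  simp only [walshCoeff, D, sub_mul, expect_sub_distrib] at hflip ⊢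
  rw [hflip]
  split_ifs <;> ring

lemma walshCoeff_D_D (i j : Fin n) (g : (Fin n → Bool) → ℝ) (S : Finset (Fin n)) :
    walshCoeff (D i (D j g)) S = if i ∈ S ∧ j ∈ S then 4 * walshCoeff g S else 0 := by
  rw [walshCoeff_D, walshCoeff_D]
  by_cases hi : i ∈ S <;> by_cases hj : j ∈ S <;> norm_num [hi, hj, ← mul_assoc]

lemma sum_walshCoeff_D_sq (g : (Fin n → Bool) → ℝ) (S : Finset (Fin n)) :
    ∑ i, walshCoeff (D i g) S ^ 2 = 4 * #S * walshCoeff g S ^ 2 := by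
  calc ∑ i, walshCoeff (D i g) S ^ 2 = ∑ i, if i ∈ S then 4 * walshCoeff g S ^ 2 else 0 :=
        sum_congr rfl fun i _ => by rw [walshCoeff_D]; split_ifs <;> ring
    _ = 4 * #S * walshCoeff g S ^ 2 := by
        rw [sum_ite_mem, univ_inter, sum_const, nsmul_eq_mul]
        ring

lemma sum_sum_ite_ne_mul {ι : Type*} [Fintype ι] [DecidableEq ι] (a : ι → ℝ) :
    ∑ i, ∑ j, (if i ≠ j then a i * a j else 0) = (∑ i, a i) ^ 2 - ∑ i, a i ^ 2 := by
  have h : ∀ i j,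
      (if i ≠ j then a i * a j else 0) = a i * a j - if i = j then a i * a j else 0 := by
    intro i j
    split_ifs <;> simp_all
  simp only [h, sum_sub_distrib, sum_ite_eq, mem_univ, if_true, sq, sum_mul_sum]

lemma sum_offDiag_walshCoeff_D_D_sq (g : (Fin n → Bool) → ℝ) (S : Finset (Fin n)) :
    ∑ i, ∑ j, (if i ≠ j then walshCoeff (D i (D j g)) S ^ 2 else 0)
      = 16 * (#S * (#S - 1)) * walshCoeff g S ^ 2 := by
  set a : Fin n → ℝ := fun i => if i ∈ S then 1 else 0
  have ha : ∑ i, a i = #S := by simp [a]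
  have ha2 : ∑ i, a i ^ 2 = #S := by simp [a, ite_pow]
  calc ∑ i, ∑ j, (if i ≠ j then walshCoeff (D i (D j g)) S ^ 2 else 0)
      = ∑ i, ∑ j, 16 * walshCoeff g S ^ 2 * (if i ≠ j then a i * a j else 0) := by
        refine sum_congr rfl fun i _ => sum_congr rfl fun j _ => ?_
        by_cases hi : i ∈ S <;> by_cases hj : j ∈ S <;>
          norm_num [a, walshCoeff_D_D, hi, hj, mul_pow, mul_ite]
    _ = 16 * (#S * (#S - 1)) * walshCoeff g S ^ 2 := by
        simp_rw [← mul_sum, sum_sum_ite_ne_mul, ha, ha2]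
        ring

lemma walshPoly_empty (c : Finset (Fin n) → ℝ) (x : Fin n → Bool) : walshPoly ∅ c x = c ∅ := by
  simp [walshPoly, walsh]

lemma walshPoly_insert {i : Fin n} {J : Finset (Fin n)} (hi : i ∉ J) (c : Finset (Fin n) → ℝ)
    (x : Fin n → Bool) :
    walshPoly (insert i J) c x
      = walshPoly J c x + walshPoly J (fun S => c (insert i S)) x * spin (x i) := by
  rw [walshPoly, sum_powerset_insert hi, walshPoly, walshPoly, sum_mul]
  congr 1
  refine sum_congr rfl fun S hS => ?_
  rw [walsh_insert fun h => hi (mem_powerset.1 hS h)]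
  ring

lemma walshPoly_cubeFlip {i : Fin n} {J : Finset (Fin n)} (hi : i ∉ J) (c : Finset (Fin n) → ℝ)
    (x : Fin n → Bool) : walshPoly J c (cubeFlip i x) = walshPoly J c x :=
  sum_congr rfl fun S hS => by rw [walsh_cubeFlip_of_notMem fun h => hi (mem_powerset.1 hS h)]

section BonamiStep

variable {i : Fin n} {A B : (Fin n → Bool) → ℝ}

lemma expect_mul_spin_eq_zero {F : (Fin n → Bool) → ℝ} (hF : ∀ x, F (cubeFlip i x) = F x) :
    𝔼 x, F x * spin (x i) = 0 :=
  expect_eq_zero_of_cubeFlip_eq_neg fun x => by rw [hF, cubeFlip_apply_self, spin_not, mul_neg]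

lemma expect_add_mul_spin_sq (hA : ∀ x, A (cubeFlip i x) = A x)
    (hB : ∀ x, B (cubeFlip i x) = B x) :
    𝔼 x, (A x + B x * spin (x i)) ^ 2 = 𝔼 x, A x ^ 2 + 𝔼 x, B x ^ 2 := by
  have h : ∀ x, (A x + B x * spin (x i)) ^ 2
      = A x ^ 2 + B x ^ 2 + 2 * A x * B x * spin (x i) := fun x => by
    linear_combination B x ^ 2 * spin_mul_self (x i)
  simp_rw [h, expect_add_distrib]
  rw [expect_mul_spin_eq_zero fun x => by rw [hA, hB], add_zero]

lemma expect_add_mul_spin_pow_four (hA : ∀ x, A (cubeFlip i x) = A x)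
    (hB : ∀ x, B (cubeFlip i x) = B x) :
    𝔼 x, (A x + B x * spin (x i)) ^ 4
      = 𝔼 x, A x ^ 4 + 6 * 𝔼 x, A x ^ 2 * B x ^ 2 + 𝔼 x, B x ^ 4 := by
  have h : ∀ x, (A x + B x * spin (x i)) ^ 4 = A x ^ 4 + 6 * (A x ^ 2 * B x ^ 2) + B x ^ 4
      + (4 * A x ^ 3 * B x + 4 * A x * B x ^ 3) * spin (x i) := fun x => by
    linear_combination (6 * A x ^ 2 * B x ^ 2 + 4 * A x * B x ^ 3 * spin (x i)
      + B x ^ 4 * (spin (x i) ^ 2 + 1)) * spin_mul_self (x i)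
  simp_rw [h, expect_add_distrib, ← mul_expect]
  rw [expect_mul_spin_eq_zero fun x => by rw [hA, hB], add_zero]

lemma expect_add_mul_spin_pow_four_le (hA : ∀ x, A (cubeFlip i x) = A x)
    (hB : ∀ x, B (cubeFlip i x) = B x) {r : ℝ} (hr : 0 ≤ r)
    (hA4 : 𝔼 x, A x ^ 4 ≤ 9 * r * (𝔼 x, A x ^ 2) ^ 2)
    (hB4 : 𝔼 x, B x ^ 4 ≤ r * (𝔼 x, B x ^ 2) ^ 2) :
    𝔼 x, (A x + B x * spin (x i)) ^ 4 ≤ 9 * r * (𝔼 x, (A x + B x * spin (x i)) ^ 2) ^ 2 := by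
  rw [expect_add_mul_spin_pow_four hA hB, expect_add_mul_spin_sq hA hB]
  set a := 𝔼 x, A x ^ 2
  set b := 𝔼 x, B x ^ 2
  set q := 𝔼 x, A x ^ 2 * B x ^ 2
  have ha : 0 ≤ a := expect_nonneg fun x _ => sq_nonneg _
  have hb : 0 ≤ b := expect_nonneg fun x _ => sq_nonneg _
  have hq : 0 ≤ q := expect_nonneg fun x _ => by positivity
  have hCS : q ^ 2 ≤ (𝔼 x, A x ^ 4) * 𝔼 x, B x ^ 4 := by
    have h := expect_mul_sq_le_sq_mul_sq univ (A · ^ 2) (B · ^ 2)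
    simp only [← pow_mul] at h
    exact h
  have hq' : q ≤ 3 * r * a * b := by
    refine (pow_le_pow_iff_left₀ hq (by positivity) two_ne_zero).1 (hCS.trans ?_)
    calc (𝔼 x, A x ^ 4) * 𝔼 x, B x ^ 4 ≤ (9 * r * a ^ 2) * (r * b ^ 2) :=
          mul_le_mul hA4 hB4 (expect_nonneg fun x _ => by positivity) (by positivity)
      _ = (3 * r * a * b) ^ 2 := by ring
  nlinarith [mul_nonneg hr (sq_nonneg b)]

end BonamiStep

/-- **Bonami's lemma**. -/
theorem expect_walshPoly_pow_four_le (J : Finset (Fin n)) (k : ℕ) (c : Finset (Fin n) → ℝ)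
    (hc : ∀ S ⊆ J, k < #S → c S = 0) :
    𝔼 x, walshPoly J c x ^ 4 ≤ 9 ^ k * (𝔼 x, walshPoly J c x ^ 2) ^ 2 := by
  induction J using Finset.induction_on generalizing k c with
  | empty =>
    simp only [walshPoly_empty, Fintype.expect_const]
    rw [← pow_mul]
    exact le_mul_of_one_le_left (by positivity) (one_le_pow₀ (by norm_num))
  | @insert i J hi ih =>
    have hA := ih k c fun S hS => hc S (hS.trans (subset_insert i J))
    have hB : 𝔼 x, walshPoly J (fun S => c (insert i S)) x ^ 4
        ≤ 9 ^ k / 9 * (𝔼 x, walshPoly J (fun S => c (insert i S)) x ^ 2) ^ 2 := by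
      cases k with
      | zero =>
        have h0 : ∀ x, walshPoly J (fun S => c (insert i S)) x = 0 := fun x =>
          sum_eq_zero fun S hS => mul_eq_zero_of_left
            (hc _ (insert_subset_insert i (mem_powerset.1 hS))
              (card_pos.2 (insert_nonempty i S))) _
        simp [h0]
      | succ k =>
        rw [pow_succ, mul_div_cancel_right₀ _ (by norm_num)]
        refine ih k _ fun S hS hk => hc _ (insert_subset_insert i hS) ?_
        rw [card_insert_of_notMem fun h => hi (hS h)]
        omega
    simp_rw [walshPoly_insert hi]
    have h9 : 9 * (9 ^ k / 9 : ℝ) = 9 ^ k := mul_div_cancel₀ _ (by norm_num)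
    have key := expect_add_mul_spin_pow_four_le (walshPoly_cubeFlip hi c)
      (walshPoly_cubeFlip hi _) (by positivity) (by rwa [h9]) hB
    rwa [h9] at key

/-- The sum is `𝔼 g P` for the degree-`≤ k` part `P` of `g`; apply Cauchy–Schwarz twice and
Bonami's lemma to `P`. -/
theorem sum_walshCoeff_sq_le_of_card_le (k : ℕ) (g : (Fin n → Bool) → ℝ) :
    ∑ S with #S ≤ k, walshCoeff g S ^ 2 ≤ 3 ^ k * (𝔼 x, |g x|) * √(𝔼 x, g x ^ 2) := by
  set c : Finset (Fin n) → ℝ := fun S => if #S ≤ k then walshCoeff g S else 0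
  set P := walshPoly univ c
  set Q := ∑ S with #S ≤ k, walshCoeff g S ^ 2 with hQ
  have hgP : 𝔼 x, g x * P x = Q := by
    rw [expect_mul_walshPoly, powerset_univ, hQ, sum_filter]
    exact sum_congr rfl fun S _ => by split_ifs <;> simp [c, *, sq]
  have hP2 : 𝔼 x, P x ^ 2 = Q := by
    rw [expect_walshPoly_sq, powerset_univ, hQ, sum_filter]
    exact sum_congr rfl fun S _ => by split_ifs <;> simp [c, *]
  have hP4 : 𝔼 x, P x ^ 4 ≤ 9 ^ k * Q ^ 2 := by
    rw [← hP2]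
    exact expect_walshPoly_pow_four_le univ k c fun S _ hS => if_neg (not_le.2 hS)
  have hQ0 : 0 ≤ Q := sum_nonneg fun S _ => sq_nonneg _
  have hgP' : Q ^ 2 ≤ (𝔼 x, |g x|) * 𝔼 x, |g x| * P x ^ 2 := by
    have hle : Q ≤ 𝔼 x, |g x| * |P x| :=
      hgP ▸ expect_le_expect fun x _ => (le_abs_self _).trans (abs_mul _ _).le
    refine (pow_le_pow_left₀ hQ0 hle 2).trans (sq_expect_le_expect_mul_expect univ
      (fun x _ => abs_nonneg _) (fun x _ => by positivity) fun x _ => le_of_eq ?_)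
    rw [← mul_assoc, ← sq, mul_pow, sq_abs, sq_abs]
  have hgP2 : (𝔼 x, |g x| * P x ^ 2) ^ 2 ≤ (𝔼 x, g x ^ 2) * 9 ^ k * Q ^ 2 := by
    have h := expect_mul_sq_le_sq_mul_sq univ (|g ·|) (P · ^ 2)
    simp only [sq_abs, ← pow_mul] at h
    rw [mul_assoc]
    exact h.trans (mul_le_mul_of_nonneg_left hP4 (expect_nonneg fun x _ => sq_nonneg _))
  have hM : (3 ^ k * (𝔼 x, |g x|) * √(𝔼 x, g x ^ 2)) ^ 2
      = (𝔼 x, |g x|) ^ 2 * ((𝔼 x, g x ^ 2) * 9 ^ k) := by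
    rw [mul_pow, mul_pow, Real.sq_sqrt (expect_nonneg fun x _ => sq_nonneg _), ← pow_mul,
      show (3 : ℝ) ^ (k * 2) = 9 ^ k by rw [pow_mul']; norm_num]
    ring
  refine (pow_le_pow_iff_left₀ hQ0 (by positivity) two_ne_zero).1 ?_
  rw [hM]
  rcases hQ0.eq_or_lt with hQ | hQ
  · rw [← hQ, zero_pow two_ne_zero]
    positivity
  refine le_of_mul_le_mul_right ?_ (pow_pos hQ 2)
  calc Q ^ 2 * Q ^ 2 = (Q ^ 2) ^ 2 := by ring
    _ ≤ ((𝔼 x, |g x|) * 𝔼 x, |g x| * P x ^ 2) ^ 2 := pow_le_pow_left₀ (by positivity) hgP' 2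
    _ = (𝔼 x, |g x|) ^ 2 * (𝔼 x, |g x| * P x ^ 2) ^ 2 := by ring
    _ ≤ (𝔼 x, |g x|) ^ 2 * ((𝔼 x, g x ^ 2) * 9 ^ k * Q ^ 2) := by gcongr
    _ = _ := by ring

lemma normC_one (g : (Fin n → Bool) → ℝ) : normC 1 g = 𝔼 x, |g x| := by
  simp [normC, EC_eq_expect]

lemma normC_two (g : (Fin n → Bool) → ℝ) : normC 2 g = √(𝔼 x, g x ^ 2) := by
  simp [normC, EC_eq_expect, Real.sqrt_eq_rpow]

lemma normC_one_pos {g : (Fin n → Bool) → ℝ} (hg : g ≠ 0) : 0 < normC 1 g := by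
  obtain ⟨x, hx⟩ := Function.ne_iff.1 hg
  rw [normC_one]
  exact expect_pos' (fun _ _ => abs_nonneg _) ⟨x, mem_univ x, abs_pos.2 hx⟩

lemma normC_one_le_normC_two (g : (Fin n → Bool) → ℝ) : normC 1 g ≤ normC 2 g := by
  rw [normC_one, normC_two]
  refine Real.le_sqrt_of_sq_le ?_
  simpa using expect_mul_sq_le_sq_mul_sq univ (|g ·|) 1

lemma D_eq_zero_or_abs_eq_one {f : (Fin n → Bool) → ℝ} (hf : ∀ x, f x = 0 ∨ f x = 1)
    (i : Fin n) (x : Fin n → Bool) : D i f x = 0 ∨ |D i f x| = 1 := by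
  rcases hf (cubeFlip i x) with h₁ | h₁ <;> rcases hf x with h₂ | h₂ <;> simp [D, h₁, h₂]

/-- For `h` with values in `{-1, 0, 1}` every `‖h‖_q ^ q` is `𝔼 |h|`, so the claim reads
`a ^ (3 / 2) ≤ a ^ (2 / p)` for `a = 𝔼 |h| ≤ 1`. -/
lemma normC_one_mul_normC_two_le_sq {h : (Fin n → Bool) → ℝ}
    (hh : ∀ x, h x = 0 ∨ |h x| = 1) {p : ℝ} (hp : 4 / 3 ≤ p) :
    normC 1 h * normC 2 h ≤ normC p h ^ 2 := by
  set a := 𝔼 x, |h x|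
  have ha0 : 0 ≤ a := expect_nonneg fun x _ => abs_nonneg _
  have ha1 : a ≤ 1 := by
    refine (expect_le_expect fun x _ => ?_).trans (Fintype.expect_const (1 : ℝ)).le
    rcases hh x with hx | hx <;> simp [hx]
  have hnorm : ∀ q : ℝ, 0 < q → normC q h = a ^ (1 / q) := fun q hq => by
    rw [normC, EC_eq_expect]
    congr 1
    refine expect_congr rfl fun x _ => ?_
    rcases hh x with hx | hx <;> simp [hx, Real.zero_rpow hq.ne']
  rw [hnorm 1 one_pos, hnorm 2 two_pos, hnorm p (by linarith), ← Real.rpow_add' ha0 (by norm_num),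
    ← Real.rpow_natCast, ← Real.rpow_mul ha0]
  refine Real.rpow_le_rpow_of_exponent_ge' ha0 ha1 (by positivity) ?_
  rw [Nat.cast_ofNat, one_div_mul_eq_div, div_le_iff₀ (by linarith)]
  linarith

noncomputable def weightedTail (g : (Fin n → Bool) → ℝ) : ℝ :=
  ∑ S with 3 ≤ #S, walshCoeff g S ^ 2 / (#S * (#S - 1))

lemma weightedTail_zero : weightedTail (0 : (Fin n → Bool) → ℝ) = 0 := by
  simp [weightedTail, walshCoeff]

lemma weightedTail_le_of_one_le {k : ℕ} (hk : 1 ≤ k) (g : (Fin n → Bool) → ℝ) :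
    weightedTail g ≤ 3 ^ k * normC 1 g * normC 2 g / 6 + normC 2 g ^ 2 / ((k + 1) * k) := by
  have hk' : (1 : ℝ) ≤ k := by exact_mod_cast hk
  have hterm : ∀ S ∈ univ.filter fun S : Finset (Fin n) => 3 ≤ #S,
      walshCoeff g S ^ 2 / (#S * (#S - 1))
        ≤ (if #S ≤ k then walshCoeff g S ^ 2 / 6 else 0)
          + walshCoeff g S ^ 2 / ((k + 1) * k) := fun S hS => by
    have h3 : (3 : ℝ) ≤ #S := by exact_mod_cast (mem_filter.1 hS).2
    split_ifs with hSk
    · have : walshCoeff g S ^ 2 / (#S * (#S - 1)) ≤ walshCoeff g S ^ 2 / 6 :=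
        div_le_div_of_nonneg_left (sq_nonneg _) (by norm_num) (by nlinarith)
      linarith [div_nonneg (sq_nonneg (walshCoeff g S)) (by positivity : (0 : ℝ) ≤ (k + 1) * k)]
    · have : (k : ℝ) + 1 ≤ #S := by exact_mod_cast not_le.1 hSk
      rw [zero_add]
      exact div_le_div_of_nonneg_left (sq_nonneg _) (by positivity) (by nlinarith)
  calc weightedTail g
      ≤ ∑ S, ((if #S ≤ k then walshCoeff g S ^ 2 / 6 else 0)
          + walshCoeff g S ^ 2 / ((k + 1) * k)) :=
        (sum_le_sum hterm).trans (sum_le_sum_of_subset_of_nonneg (filter_subset _ _)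
          fun S _ _ => by positivity)
    _ = (∑ S with #S ≤ k, walshCoeff g S ^ 2) / 6
          + (∑ S, walshCoeff g S ^ 2) / ((k + 1) * k) := by
        rw [sum_add_distrib, sum_filter, sum_div, sum_div]
        simp only [ite_div, zero_div]
    _ ≤ 3 ^ k * normC 1 g * normC 2 g / 6 + normC 2 g ^ 2 / ((k + 1) * k) := by
        rw [← expect_sq_eq_sum_walshCoeff_sq, normC_one, normC_two,
          Real.sq_sqrt (expect_nonneg fun x _ => sq_nonneg _)]
        gcongr
        exact sum_walshCoeff_sq_le_of_card_le k g

lemma three_pow_floor_mul_sq_le {L : ℝ} (hL : 0 ≤ L) :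
    3 ^ ⌊L / 4⌋₊ * (1 + L) ^ 2 ≤ 16 * Real.exp L := by
  have h3 : (3 : ℝ) ^ ⌊L / 4⌋₊ ≤ Real.exp (L / 2) :=
    calc (3 : ℝ) ^ ⌊L / 4⌋₊ ≤ Real.exp 2 ^ ⌊L / 4⌋₊ :=
          pow_le_pow_left₀ (by norm_num) (by linarith [Real.add_one_le_exp 2]) _
      _ = Real.exp (2 * ⌊L / 4⌋₊) := by rw [← Real.exp_nat_mul, mul_comm]
      _ ≤ Real.exp (L / 2) :=
          Real.exp_le_exp.2 (by linarith [Nat.floor_le (by positivity : 0 ≤ L / 4)])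
  have hsq : (1 + L) ^ 2 ≤ 16 * Real.exp (L / 2) := by
    have h := pow_le_pow_left₀ (by positivity) (Real.add_one_le_exp (L / 4)) 2
    rw [← Real.exp_nat_mul, Nat.cast_ofNat, show 2 * (L / 4) = L / 2 by ring] at h
    nlinarith
  calc 3 ^ ⌊L / 4⌋₊ * (1 + L) ^ 2 ≤ Real.exp (L / 2) * (16 * Real.exp (L / 2)) :=
        mul_le_mul h3 hsq (by positivity) (by positivity)
    _ = 16 * Real.exp L := by rw [mul_left_comm, ← Real.exp_add, add_halves]

noncomputable def talagrandFunctional (h : (Fin n → Bool) → ℝ) : ℝ :=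
  if h = 0 then 0 else normC 2 h ^ 2 / (1 + Real.log (normC 2 h / normC 1 h)) ^ 2

/-- Split `weightedTail_le_of_one_le` at degree `⌊L / 4⌋ + 2`, where `L = log (‖g‖₂ / ‖g‖₁)`. -/
theorem weightedTail_le_talagrandFunctional (g : (Fin n → Bool) → ℝ) :
    weightedTail g ≤ 40 * talagrandFunctional g := by
  rcases eq_or_ne g 0 with rfl | hg
  · simp [weightedTail_zero, talagrandFunctional]
  rw [talagrandFunctional, if_neg hg]
  set N₁ := normC 1 g
  set N₂ := normC 2 g
  have hN₁ : 0 < N₁ := normC_one_pos hg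
  have hN₂ : 0 < N₂ := hN₁.trans_le (normC_one_le_normC_two g)
  set L := Real.log (N₂ / N₁)
  have hL : 0 ≤ L := Real.log_nonneg ((one_le_div hN₁).2 (normC_one_le_normC_two g))
  have hexpL : Real.exp L = N₂ / N₁ := Real.exp_log (by positivity)
  set j := ⌊L / 4⌋₊
  have hj : L / 4 < j + 1 := Nat.lt_floor_add_one _
  have hZ : 0 < (1 + L) ^ 2 := by positivity
  have hlow : 3 ^ (j + 2) * N₁ * N₂ / 6 ≤ 24 * N₂ ^ 2 / (1 + L) ^ 2 := by
    have key : 3 ^ j * (1 + L) ^ 2 * (N₁ * N₂) ≤ 16 * N₂ ^ 2 :=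
      calc 3 ^ j * (1 + L) ^ 2 * (N₁ * N₂) ≤ 16 * (N₂ / N₁) * (N₁ * N₂) :=
            mul_le_mul_of_nonneg_right (hexpL ▸ three_pow_floor_mul_sq_le hL) (by positivity)
        _ = 16 * N₂ ^ 2 := by field_simp
    rw [le_div_iff₀ hZ, pow_add]
    linarith
  have hhigh : N₂ ^ 2 / ((((j + 2 : ℕ) : ℝ) + 1) * ((j + 2 : ℕ) : ℝ))
      ≤ 16 * N₂ ^ 2 / (1 + L) ^ 2 := by
    have hZj : (1 + L) ^ 2 ≤ 16 * ((j + 2 + 1) * (j + 2)) := by nlinarith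
    rw [div_le_div_iff₀ (by positivity) hZ]
    push_cast
    nlinarith [mul_le_mul_of_nonneg_left hZj (sq_nonneg N₂)]
  calc weightedTail g ≤ _ := weightedTail_le_of_one_le (k := j + 2) (by omega) g
    _ ≤ 24 * N₂ ^ 2 / (1 + L) ^ 2 + 16 * N₂ ^ 2 / (1 + L) ^ 2 := add_le_add hlow hhigh
    _ = 40 * (N₂ ^ 2 / (1 + L) ^ 2) := by ring

lemma sum_walshCoeff_D_sq_le_normC_sq {f : (Fin n → Bool) → ℝ} (hf : ∀ x, f x = 0 ∨ f x = 1)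
    {p : ℝ} (hp : 4 / 3 ≤ p) (i : Fin n) :
    ∑ S with #S ≤ 2, walshCoeff (D i f) S ^ 2 ≤ 9 * normC p (D i f) ^ 2 := by
  have h := sum_walshCoeff_sq_le_of_card_le 2 (D i f)
  rw [← normC_one, ← normC_two] at h
  nlinarith [normC_one_mul_normC_two_le_sq (D_eq_zero_or_abs_eq_one hf i) hp]

theorem varC_le_sum_walshCoeff_D_add_sum_weightedTail (g : (Fin n → Bool) → ℝ) :
    varC g ≤ 1 / 4 * ∑ i, ∑ S with #S ≤ 2, walshCoeff (D i g) S ^ 2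
      + 1 / 16 * ∑ i, ∑ j, (if i ≠ j then weightedTail (D i (D j g)) else 0) := by
  have h₁ : ∑ i, ∑ S with #S ≤ 2, walshCoeff (D i g) S ^ 2
      = ∑ S with #S ≤ 2, 4 * #S * walshCoeff g S ^ 2 := by
    rw [sum_comm]
    simp_rw [sum_walshCoeff_D_sq]
  have h₂ : ∑ i, ∑ j, (if i ≠ j then weightedTail (D i (D j g)) else 0)
      = ∑ S with 3 ≤ #S, 16 * walshCoeff g S ^ 2 :=
    calc ∑ i, ∑ j, (if i ≠ j then weightedTail (D i (D j g)) else 0)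
        = ∑ i, ∑ j, ∑ S with 3 ≤ #S,
            (if i ≠ j then walshCoeff (D i (D j g)) S ^ 2 else 0) / (#S * (#S - 1)) := by
          simp_rw [weightedTail]
          refine sum_congr rfl fun i _ => sum_congr rfl fun j _ => ?_
          split_ifs <;> simp
      _ = ∑ S with 3 ≤ #S,
            (∑ i, ∑ j, if i ≠ j then walshCoeff (D i (D j g)) S ^ 2 else 0) / (#S * (#S - 1)) := by
          rw [sum_congr rfl fun i _ => sum_comm, sum_comm]
          simp_rw [sum_div]
      _ = ∑ S with 3 ≤ #S, 16 * walshCoeff g S ^ 2 := sum_congr rfl fun S hS => by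
          have h3 : (3 : ℝ) ≤ #S := by exact_mod_cast (mem_filter.1 hS).2
          have h0 : (#S : ℝ) * (#S - 1) ≠ 0 := mul_ne_zero (by linarith) (by linarith)
          rw [sum_offDiag_walshCoeff_D_D_sq, mul_right_comm, mul_div_cancel_right₀ _ h0]
  rw [varC_eq_sum_walshCoeff_sq, h₁, h₂, mul_sum, mul_sum, sum_filter, sum_filter,
    ← sum_add_distrib]
  refine (sum_le_sum fun S hS => ?_).trans
    (sum_le_sum_of_subset_of_nonneg (erase_subset _ _) fun S _ _ => by split_ifs <;> positivity)
  have hS : 1 ≤ #S := card_pos.2 (nonempty_iff_ne_empty.2 (ne_of_mem_erase hS))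
  have hS' : (1 : ℝ) ≤ #S := by exact_mod_cast hS
  split_ifs <;> first | omega | nlinarith [sq_nonneg (walshCoeff g S)]

theorem varC_le_of_boolean {f : (Fin n → Bool) → ℝ} (hf : ∀ x, f x = 0 ∨ f x = 1) {p : ℝ}
    (hp : 4 / 3 ≤ p) :
    varC f ≤ 3 * (∑ i, normC p (D i f) ^ 2
      + ∑ i, ∑ j, if i ≠ j then talagrandFunctional (D i (D j f)) else 0) := by
  have hsecond : ∀ i j, (if i ≠ j then weightedTail (D i (D j f)) else 0)
      ≤ 40 * if i ≠ j then talagrandFunctional (D i (D j f)) else 0 := fun i j => by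
    split_ifs
    · exact weightedTail_le_talagrandFunctional _
    · simp
  have hnonneg : 0 ≤ ∑ i, ∑ j, if i ≠ j then talagrandFunctional (D i (D j f)) else 0 :=
    sum_nonneg fun i _ => sum_nonneg fun j _ => by
      unfold talagrandFunctional
      split_ifs <;> positivity
  calc varC f ≤ _ := varC_le_sum_walshCoeff_D_add_sum_weightedTail f
    _ ≤ 1 / 4 * ∑ i, 9 * normC p (D i f) ^ 2
          + 1 / 16 * ∑ i, ∑ j, 40 * if i ≠ j then talagrandFunctional (D i (D j f)) else 0 := by
        gcongr with i _ i _ j _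
        · exact sum_walshCoeff_D_sq_le_normC_sq hf hp i
        · exact hsecond i j
    _ ≤ _ := by
        simp_rw [← mul_sum]
        nlinarith [sum_nonneg fun i (_ : i ∈ univ) => sq_nonneg (normC p (D i f))]

end BooleanCube

theorem talagrand_order_two_general (s₀ : ℝ) (hs₀' : s₀ < 1 / 128) :
    ∃ C : ℝ, 0 < C ∧ ∀ n : ℕ, 1 ≤ n → ∀ f : (Fin n → Bool) → ℝ,
      (∀ x, f x = 0 ∨ f x = 1) →
      varC f ≤ C * ((∑ i : Fin n, (normC (1 + Real.exp (-2 * s₀)) (D i f)) ^ 2)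
        + ∑ i : Fin n, ∑ j : Fin n,
            if i ≠ j then
              (if D i (D j f) = 0 then 0 else
                (normC 2 (D i (D j f))) ^ 2 /
                  (1 + Real.log (normC 2 (D i (D j f)) / normC 1 (D i (D j f)))) ^ 2)
            else 0) := by
  refine ⟨3, by norm_num, fun n _ f hf => BooleanCube.varC_le_of_boolean hf ?_⟩
  linarith [Real.add_one_le_exp (-2 * s₀)]

/-- Second-order Talagrand inequality on the discrete cube: for fixed `0 < s₀ < 1/128`
there is a constant `C > 0` (depending at most on `s₀`) such that for every Boolean
function `f` the variance is controlled by first-order `L^{1+e^{-2s₀}}` norms and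
second-order logarithmically-weighted `L²` norms of the discrete derivatives. -/
theorem talagrand_order_two (s₀ : ℝ) (hs₀ : 0 < s₀) (hs₀' : s₀ < 1 / 128) :
    ∃ C : ℝ, 0 < C ∧ ∀ n : ℕ, 1 ≤ n → ∀ f : (Fin n → Bool) → ℝ,
      (∀ x, f x = 0 ∨ f x = 1) →
      varC f ≤ C * ((∑ i : Fin n, (normC (1 + Real.exp (-2 * s₀)) (D i f)) ^ 2)
        + ∑ i : Fin n, ∑ j : Fin n,
            if i ≠ j then
              (if D i (D j f) = 0 then 0 else
                (normC 2 (D i (D j f))) ^ 2 /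
                  (1 + Real.log (normC 2 (D i (D j f)) / normC 1 (D i (D j f)))) ^ 2)
            else 0) :=
  talagrand_order_two_general s₀ hs₀'
end

section
/- (KKL-type alternative at order two) There exist absolute constants c > 0 and η ∈ (0,1), independent of n and f, such that for every n ≥ 2 and every Boolean function f : C_n → {0,1}, at least one of the following holds: (a) there exists i ∈ {1,…,n} with I_i(f) ≥ c · (Var_{μⁿ}(f))^{1/(1+η)} · (1/n)^{1/(1+η)}; or (b) there exist i ≠ j in {1,…,n} with I_{(i,j)}(f) ≥ c · Var_{μⁿ}(f) · ((log n)/n)². -/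
open scoped Classical

/-- Influence of the `i`-th coordinate of a Boolean function: `Iᵢ(f) = ‖Dᵢf‖₁`. -/
noncomputable def influence {n : ℕ} (i : Fin n) (f : (Fin n → Bool) → ℝ) : ℝ :=
  normC 1 (D i f)

/-- Influence of the couple `(i,j)` : `I₍ᵢ,ⱼ₎(f) = (1/2)‖D_{ij} f‖₁` where `D_{ij} = Dᵢ ∘ Dⱼ`. -/
noncomputable def influence2 {n : ℕ} (i j : Fin n) (f : (Fin n → Bool) → ℝ) : ℝ :=
  (1 / 2) * normC 1 (D i (D j f))

/-!
Expand `f` in the Walsh basis. Since `I₍ᵢ,ⱼ₎(f) ≥ 4 ∑_{S ∋ i,j} f̂(S)²`, double counting over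
pairs shows that when every pair influence is below `c · Var f · (log n / n)²`, the Fourier
weight above level `d ≈ log n / 20` is a small fraction of `Var f`. The weight of `Dᵢ f` up to
level `d` is at most `3ᵈ Iᵢ(f)^{3/2}`, by two Cauchy–Schwarz steps against `Dᵢ f ∈ {-1, 0, 1}`
and the Bonami inequality `‖q‖₄⁴ ≤ 9ᵈ ‖q‖₂⁴` for polynomials `q` of degree `≤ d`.
Summing over `i`, `Var f ≲ n · 3ᵈ · maxᵢ Iᵢ(f)^{3/2} ≲ n^{11/10} · maxᵢ Iᵢ(f)^{3/2}`, which is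
alternative (a) with `η = 4/11`.
-/

namespace KKL

open Finset Real

variable {n : ℕ}

lemma ec_add (f g : (Fin n → Bool) → ℝ) : EC (fun x => f x + g x) = EC f + EC g := by
  simp only [EC, sum_add_distrib, add_div]

lemma ec_sub (f g : (Fin n → Bool) → ℝ) : EC (fun x => f x - g x) = EC f - EC g := by
  simp only [EC, sum_sub_distrib, sub_div]

lemma ec_neg (f : (Fin n → Bool) → ℝ) : EC (fun x => -f x) = -EC f := by
  simp only [EC, sum_neg_distrib, neg_div]

lemma ec_const (a : ℝ) : EC (fun _ : Fin n → Bool => a) = a := by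
  simp [EC]

lemma ec_const_mul (a : ℝ) (f : (Fin n → Bool) → ℝ) : EC (fun x => a * f x) = a * EC f := by
  simp only [EC, ← mul_sum, mul_div_assoc]

lemma ec_sum {ι : Type*} (s : Finset ι) (f : ι → (Fin n → Bool) → ℝ) :
    EC (fun x => ∑ j ∈ s, f j x) = ∑ j ∈ s, EC (f j) := by
  rw [EC, sum_comm, sum_div]
  rfl

lemma ec_mono {f g : (Fin n → Bool) → ℝ} (h : ∀ x, f x ≤ g x) : EC f ≤ EC g :=
  div_le_div_of_nonneg_right (sum_le_sum fun x _ => h x) (by positivity)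

lemma ec_nonneg {f : (Fin n → Bool) → ℝ} (h : ∀ x, 0 ≤ f x) : 0 ≤ EC f :=
  div_nonneg (sum_nonneg fun x _ => h x) (by positivity)

lemma sq_ec_le_ec_mul_ec {r u v : (Fin n → Bool) → ℝ} (hu : ∀ x, 0 ≤ u x) (hv : ∀ x, 0 ≤ v x)
    (h : ∀ x, r x ^ 2 ≤ u x * v x) : EC r ^ 2 ≤ EC u * EC v := by
  rw [EC, EC, EC, div_pow, div_mul_div_comm, ← sq]
  exact div_le_div_of_nonneg_right
    (sum_sq_le_sum_mul_sum_of_sq_le_mul _ (fun x _ => hu x) (fun x _ => hv x) fun x _ => h x)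
    (by positivity)

lemma normC_one (g : (Fin n → Bool) → ℝ) : normC 1 g = EC (fun x => |g x|) := by
  simp [normC]

lemma cubeFlip_involutive (i : Fin n) : Function.Involutive (cubeFlip i) := by
  intro x
  funext j
  by_cases h : j = i
  · subst h; simp [cubeFlip]
  · simp [cubeFlip, Function.update_of_ne h]

lemma cubeFlip_apply_self (i : Fin n) (x : Fin n → Bool) : cubeFlip i x i = !x i := by
  simp [cubeFlip]

lemma cubeFlip_apply_of_ne {i j : Fin n} (h : j ≠ i) (x : Fin n → Bool) :
    cubeFlip i x j = x j := by
  simp [cubeFlip, Function.update_of_ne h]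

lemma ec_comp_cubeFlip (i : Fin n) (g : (Fin n → Bool) → ℝ) :
    EC (fun x => g (cubeFlip i x)) = EC g := by
  rw [EC, EC, Fintype.sum_bijective _ (cubeFlip_involutive i).bijective _ g fun _ => rfl]

/-- `x : Fin n → Bool` stands for the point `(spin (x i))ᵢ` of `{-1,1}ⁿ`. -/
def spin (b : Bool) : ℝ := if b then 1 else -1

lemma spin_mul_self (b : Bool) : spin b * spin b = 1 := by cases b <;> simp [spin]

lemma spin_not (b : Bool) : spin (!b) = -spin b := by cases b <;> simp [spin]

lemma spin_mul_spin_of_ne {a b : Bool} (h : a ≠ b) : spin a * spin b = -1 := by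
  cases a <;> cases b <;> simp_all [spin]

lemma ec_spin_mul_eq_zero (j : Fin n) {h : (Fin n → Bool) → ℝ}
    (hh : ∀ x, h (cubeFlip j x) = h x) : EC (fun x => spin (x j) * h x) = 0 := by
  have := ec_comp_cubeFlip j (fun x => spin (x j) * h x)
  simp only [cubeFlip_apply_self, spin_not, hh, neg_mul, ec_neg] at this
  linarith

def walsh (S : Finset (Fin n)) (x : Fin n → Bool) : ℝ := ∏ i ∈ S, spin (x i)

lemma walsh_mul_self (S : Finset (Fin n)) (x : Fin n → Bool) : walsh S x * walsh S x = 1 := by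
  rw [walsh, ← prod_mul_distrib]
  exact prod_eq_one fun i _ => spin_mul_self (x i)

lemma walsh_insert {j : Fin n} {S : Finset (Fin n)} (hj : j ∉ S) (x : Fin n → Bool) :
    walsh (insert j S) x = spin (x j) * walsh S x :=
  prod_insert hj

lemma walsh_comp_cubeFlip (S : Finset (Fin n)) (i : Fin n) (x : Fin n → Bool) :
    walsh S (cubeFlip i x) = (if i ∈ S then -1 else 1) * walsh S x := by
  have hrest : ∀ T : Finset (Fin n), i ∉ T → walsh T (cubeFlip i x) = walsh T x := fun T hT =>
    prod_congr rfl fun j hj => by rw [cubeFlip_apply_of_ne (ne_of_mem_of_not_mem hj hT)]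
  by_cases h : i ∈ S
  · rw [if_pos h, ← insert_erase h, walsh_insert (notMem_erase i S), walsh_insert
      (notMem_erase i S), hrest _ (notMem_erase i S), cubeFlip_apply_self, spin_not]
    ring
  · rw [if_neg h, one_mul, hrest S h]

lemma walsh_mul_walsh (S T : Finset (Fin n)) (x : Fin n → Bool) :
    walsh S x * walsh T x = walsh (symmDiff S T) x := by
  have hS : walsh S x = walsh (S \ T) x * walsh (S ∩ T) x := by
    rw [walsh, walsh, walsh, ← prod_union (disjoint_sdiff_inter S T), sdiff_union_inter]
  have hT : walsh T x = walsh (T \ S) x * walsh (S ∩ T) x := by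
    rw [walsh, walsh, walsh, inter_comm S T, ← prod_union (disjoint_sdiff_inter T S),
      sdiff_union_inter]
  have hST : walsh (symmDiff S T) x = walsh (S \ T) x * walsh (T \ S) x := by
    rw [walsh, walsh, walsh, ← prod_union disjoint_sdiff_sdiff]
    rfl
  rw [hS, hT, hST]
  linear_combination (walsh (S \ T) x * walsh (T \ S) x) * walsh_mul_self (S ∩ T) x

lemma ec_walsh (S : Finset (Fin n)) : EC (walsh S) = if S = ∅ then 1 else 0 := by
  split_ifs with h
  · subst h
    exact (congrArg EC (funext fun x => prod_empty)).trans (ec_const 1)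
  · obtain ⟨i, hi⟩ := nonempty_iff_ne_empty.2 h
    have := ec_comp_cubeFlip i (walsh S)
    simp only [walsh_comp_cubeFlip, if_pos hi, ec_const_mul] at this
    linarith

lemma ec_walsh_mul_walsh (S T : Finset (Fin n)) :
    EC (fun x => walsh S x * walsh T x) = if S = T then 1 else 0 := by
  simp only [walsh_mul_walsh, ec_walsh]
  exact if_congr symmDiff_eq_bot rfl rfl

lemma sum_walsh_mul_walsh (y x : Fin n → Bool) :
    ∑ S : Finset (Fin n), walsh S y * walsh S x = if y = x then 2 ^ n else 0 := by
  simp only [walsh, ← prod_mul_distrib]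
  rw [← powerset_univ, ← prod_add_one]
  split_ifs with h
  · subst h
    simp only [spin_mul_self, prod_const, card_univ, Fintype.card_fin]
    norm_num
  · obtain ⟨i, hi⟩ := Function.ne_iff.1 h
    exact prod_eq_zero (mem_univ i) (by rw [spin_mul_spin_of_ne hi]; ring)

noncomputable def fourierCoeff (g : (Fin n → Bool) → ℝ) (S : Finset (Fin n)) : ℝ :=
  EC (fun x => g x * walsh S x)

lemma fourierCoeff_const_mul (a : ℝ) (g : (Fin n → Bool) → ℝ) (S : Finset (Fin n)) :
    fourierCoeff (fun x => a * g x) S = a * fourierCoeff g S := by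
  simp only [fourierCoeff, mul_assoc, ec_const_mul]

lemma fourierCoeff_add (f g : (Fin n → Bool) → ℝ) (S : Finset (Fin n)) :
    fourierCoeff (fun x => f x + g x) S = fourierCoeff f S + fourierCoeff g S := by
  simp only [fourierCoeff, add_mul, ec_add]

lemma fourierCoeff_sub (f g : (Fin n → Bool) → ℝ) (S : Finset (Fin n)) :
    fourierCoeff (fun x => f x - g x) S = fourierCoeff f S - fourierCoeff g S := by
  simp only [fourierCoeff, sub_mul, ec_sub]

lemma sum_fourierCoeff_mul_walsh (g : (Fin n → Bool) → ℝ) (x : Fin n → Bool) :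
    ∑ S : Finset (Fin n), fourierCoeff g S * walsh S x = g x := by
  have hterm : ∀ S : Finset (Fin n), fourierCoeff g S * walsh S x =
      ∑ y : Fin n → Bool, g y * (walsh S y * walsh S x) / 2 ^ n := fun S => by
    rw [fourierCoeff, EC, div_mul_eq_mul_div, sum_mul, sum_div]
    exact sum_congr rfl fun y _ => by ring
  simp only [hterm]
  rw [sum_comm]
  simp only [← sum_div, ← mul_sum, sum_walsh_mul_walsh, mul_ite, mul_zero, ite_div, zero_div,
    sum_ite_eq', mem_univ, if_true]
  field_simp
lemma fourierCoeff_sum_mul_walsh (A : Finset (Finset (Fin n))) (a : Finset (Fin n) → ℝ)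
    (T : Finset (Fin n)) :
    fourierCoeff (fun x => ∑ S ∈ A, a S * walsh S x) T = if T ∈ A then a T else 0 := by
  simp only [fourierCoeff, sum_mul, mul_assoc, ec_sum, ec_const_mul, ec_walsh_mul_walsh,
    mul_ite, mul_one, mul_zero, sum_ite_eq']

lemma ec_mul_eq_sum_fourierCoeff (f g : (Fin n → Bool) → ℝ) :
    EC (fun x => f x * g x) = ∑ S : Finset (Fin n), fourierCoeff f S * fourierCoeff g S := by
  conv_lhs => enter [1, x]; rw [← sum_fourierCoeff_mul_walsh g x, mul_sum]
  simp only [ec_sum, mul_left_comm (f _), ec_const_mul]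
  exact sum_congr rfl fun S _ => mul_comm _ _

lemma ec_sq_eq_sum_fourierCoeff_sq (g : (Fin n → Bool) → ℝ) :
    EC (fun x => g x ^ 2) = ∑ S : Finset (Fin n), fourierCoeff g S ^ 2 := by
  simp only [sq, ec_mul_eq_sum_fourierCoeff]

lemma fourierCoeff_empty (g : (Fin n → Bool) → ℝ) : fourierCoeff g ∅ = EC g := by
  simp [fourierCoeff, walsh]

lemma varC_eq_sum_fourierCoeff_sq (g : (Fin n → Bool) → ℝ) :
    varC g = ∑ S ∈ univ.erase ∅, fourierCoeff g S ^ 2 := by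
  rw [varC, ec_sq_eq_sum_fourierCoeff_sq, ← fourierCoeff_empty, sum_erase_eq_sub (mem_univ _)]

lemma varC_nonneg (g : (Fin n → Bool) → ℝ) : 0 ≤ varC g := by
  rw [varC_eq_sum_fourierCoeff_sq]
  exact sum_nonneg fun S _ => sq_nonneg _

lemma fourierCoeff_comp_cubeFlip (i : Fin n) (g : (Fin n → Bool) → ℝ) (S : Finset (Fin n)) :
    fourierCoeff (fun x => g (cubeFlip i x)) S = (if i ∈ S then -1 else 1) * fourierCoeff g S := by
  rw [fourierCoeff, ← ec_comp_cubeFlip i]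
  simp only [cubeFlip_involutive i _, walsh_comp_cubeFlip, mul_left_comm (g _), ec_const_mul,
    fourierCoeff]

lemma fourierCoeff_D (i : Fin n) (g : (Fin n → Bool) → ℝ) (S : Finset (Fin n)) :
    fourierCoeff (D i g) S = if i ∈ S then -2 * fourierCoeff g S else 0 := by
  unfold D
  rw [fourierCoeff_sub, fourierCoeff_comp_cubeFlip]
  split_ifs <;> ring

lemma fourierCoeff_D_D (i j : Fin n) (g : (Fin n → Bool) → ℝ) (S : Finset (Fin n)) :
    fourierCoeff (D i (D j g)) S = if i ∈ S ∧ j ∈ S then 4 * fourierCoeff g S else 0 := by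
  simp only [fourierCoeff_D]
  split_ifs <;> first | tauto | ring

def FourierSupported (g : (Fin n → Bool) → ℝ) (J : Finset (Fin n)) (k : ℕ) : Prop :=
  ∀ S, fourierCoeff g S ≠ 0 → S ⊆ J ∧ #S ≤ k

lemma eq_fourierCoeff_empty_of_fourierSupported {g : (Fin n → Bool) → ℝ} {J : Finset (Fin n)}
    {k : ℕ} (hg : FourierSupported g J k) (hJk : J = ∅ ∨ k = 0) (x : Fin n → Bool) :
    g x = fourierCoeff g ∅ := by
  rw [← sum_fourierCoeff_mul_walsh g x, sum_eq_single ∅]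
  · simp [walsh]
  · intro S _ hS
    by_contra hne
    obtain ⟨hSJ, hSk⟩ := hg S (left_ne_zero_of_mul hne)
    rcases hJk with rfl | rfl
    · exact hS (subset_empty.1 hSJ)
    · exact hS (card_eq_zero.1 (Nat.le_zero.1 hSk))
  · simp

noncomputable def evenPart (j : Fin n) (g : (Fin n → Bool) → ℝ) (x : Fin n → Bool) : ℝ :=
  (g x + g (cubeFlip j x)) / 2

noncomputable def oddPart (j : Fin n) (g : (Fin n → Bool) → ℝ) (x : Fin n → Bool) : ℝ :=
  spin (x j) * (g x - g (cubeFlip j x)) / 2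

lemma evenPart_add_spin_mul_oddPart (j : Fin n) (g : (Fin n → Bool) → ℝ) (x : Fin n → Bool) :
    evenPart j g x + spin (x j) * oddPart j g x = g x := by
  rw [evenPart, oddPart]
  linear_combination (g x - g (cubeFlip j x)) / 2 * spin_mul_self (x j)

lemma evenPart_comp_cubeFlip (j : Fin n) (g : (Fin n → Bool) → ℝ) (x : Fin n → Bool) :
    evenPart j g (cubeFlip j x) = evenPart j g x := by
  rw [evenPart, evenPart, cubeFlip_involutive j x, add_comm]

lemma oddPart_comp_cubeFlip (j : Fin n) (g : (Fin n → Bool) → ℝ) (x : Fin n → Bool) :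
    oddPart j g (cubeFlip j x) = oddPart j g x := by
  rw [oddPart, oddPart, cubeFlip_involutive j x, cubeFlip_apply_self, spin_not]
  ring

lemma fourierCoeff_evenPart (j : Fin n) (g : (Fin n → Bool) → ℝ) (S : Finset (Fin n)) :
    fourierCoeff (evenPart j g) S = if j ∈ S then 0 else fourierCoeff g S := by
  have heven : evenPart j g = fun x => 2⁻¹ * (g x + g (cubeFlip j x)) := by
    funext x; rw [evenPart]; ring
  rw [heven, fourierCoeff_const_mul, fourierCoeff_add, fourierCoeff_comp_cubeFlip]
  split_ifs <;> ring

lemma fourierCoeff_spin_mul (j : Fin n) (h : (Fin n → Bool) → ℝ) (S : Finset (Fin n)) :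
    fourierCoeff (fun x => spin (x j) * h x) S =
      fourierCoeff h (if j ∈ S then S.erase j else insert j S) := by
  unfold fourierCoeff
  congr 1
  funext x
  split_ifs with hj
  · conv_lhs => rw [← insert_erase hj, walsh_insert (notMem_erase j S)]
    linear_combination h x * walsh (S.erase j) x * spin_mul_self (x j)
  · rw [walsh_insert hj]
    ring

lemma fourierCoeff_oddPart (j : Fin n) (g : (Fin n → Bool) → ℝ) (S : Finset (Fin n)) :
    fourierCoeff (oddPart j g) S = if j ∈ S then 0 else fourierCoeff g (insert j S) := by
  have hodd : oddPart j g = fun x => spin (x j) * (-(1 / 2) * D j g x) := by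
    funext x; rw [oddPart, D]; ring
  rw [hodd, fourierCoeff_spin_mul, fourierCoeff_const_mul, fourierCoeff_D]
  split_ifs with hj <;> simp_all

lemma FourierSupported.evenPart {g : (Fin n → Bool) → ℝ} {j : Fin n} {J : Finset (Fin n)}
    {k : ℕ} (hg : FourierSupported g (insert j J) k) :
    FourierSupported (evenPart j g) J k := by
  intro S hS
  rw [fourierCoeff_evenPart] at hS
  split_ifs at hS with hjS
  · exact absurd rfl hS
  obtain ⟨hSJ, hSk⟩ := hg S hS
  exact ⟨(subset_insert_iff_of_notMem hjS).1 hSJ, hSk⟩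

lemma FourierSupported.oddPart {g : (Fin n → Bool) → ℝ} {j : Fin n} {J : Finset (Fin n)}
    {k : ℕ} (hg : FourierSupported g (insert j J) (k + 1)) :
    FourierSupported (oddPart j g) J k := by
  intro S hS
  rw [fourierCoeff_oddPart] at hS
  split_ifs at hS with hjS
  · exact absurd rfl hS
  obtain ⟨hSJ, hSk⟩ := hg _ hS
  rw [card_insert_of_notMem hjS] at hSk
  exact ⟨(subset_insert_iff_of_notMem hjS).1 ((subset_insert j S).trans hSJ), by omega⟩

lemma ec_sq_eq_evenPart_add_oddPart (j : Fin n) (g : (Fin n → Bool) → ℝ) :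
    EC (fun x => g x ^ 2) =
      EC (fun x => evenPart j g x ^ 2) + EC (fun x => oddPart j g x ^ 2) := by
  have hexpand : ∀ x, g x ^ 2 = (evenPart j g x ^ 2 + oddPart j g x ^ 2) +
      spin (x j) * (2 * evenPart j g x * oddPart j g x) := fun x => by
    rw [← evenPart_add_spin_mul_oddPart j g x]
    linear_combination oddPart j g x ^ 2 * spin_mul_self (x j)
  simp only [hexpand, ec_add]
  rw [ec_spin_mul_eq_zero j fun x => by rw [evenPart_comp_cubeFlip, oddPart_comp_cubeFlip],
    add_zero]

lemma ec_pow_four_eq_evenPart_add_oddPart (j : Fin n) (g : (Fin n → Bool) → ℝ) :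
    EC (fun x => g x ^ 4) = EC (fun x => evenPart j g x ^ 4) +
      6 * EC (fun x => evenPart j g x ^ 2 * oddPart j g x ^ 2) +
        EC (fun x => oddPart j g x ^ 4) := by
  have hexpand : ∀ x, g x ^ 4 = (evenPart j g x ^ 4 +
      6 * (evenPart j g x ^ 2 * oddPart j g x ^ 2) + oddPart j g x ^ 4) +
      spin (x j) * (4 * evenPart j g x ^ 3 * oddPart j g x +
        4 * evenPart j g x * oddPart j g x ^ 3) := fun x => by
    rw [← evenPart_add_spin_mul_oddPart j g x]
    set a := evenPart j g x
    set b := oddPart j g x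
    linear_combination (6 * a ^ 2 * b ^ 2 + 4 * a * b ^ 3 * spin (x j) +
      b ^ 4 * (spin (x j) * spin (x j) + 1)) * spin_mul_self (x j)
  simp only [hexpand, ec_add, ec_const_mul]
  rw [ec_spin_mul_eq_zero j fun x => by rw [evenPart_comp_cubeFlip, oddPart_comp_cubeFlip],
    add_zero]

lemma bonami_step {P Q M p q : ℝ} (k : ℕ) (hp : 0 ≤ p) (hq : 0 ≤ q) (hQ₀ : 0 ≤ Q)
    (hM₀ : 0 ≤ M) (hP : P ≤ 9 ^ (k + 1) * p ^ 2) (hQ : Q ≤ 9 ^ k * q ^ 2)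
    (hM : M ^ 2 ≤ P * Q) : P + 6 * M + Q ≤ 9 ^ (k + 1) * (p + q) ^ 2 := by
  have hM' : M ≤ 3 * 9 ^ k * p * q := by
    refine (pow_le_pow_iff_left₀ hM₀ (by positivity) two_ne_zero).1 (hM.trans ?_)
    calc P * Q ≤ 9 ^ (k + 1) * p ^ 2 * (9 ^ k * q ^ 2) :=
          mul_le_mul hP hQ hQ₀ (by positivity)
      _ = (3 * 9 ^ k * p * q) ^ 2 := by ring
  rw [pow_succ] at hP ⊢
  nlinarith [mul_nonneg (pow_nonneg (by norm_num : (0 : ℝ) ≤ 9) k) (sq_nonneg q)]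

lemma ec_pow_four_le_of_forall_eq {g : (Fin n → Bool) → ℝ} {c : ℝ} (hg : ∀ x, g x = c)
    (k : ℕ) : EC (fun x => g x ^ 4) ≤ 9 ^ k * EC (fun x => g x ^ 2) ^ 2 := by
  simp only [hg, ec_const]
  calc c ^ 4 = 1 * (c ^ 2) ^ 2 := by ring
    _ ≤ 9 ^ k * (c ^ 2) ^ 2 :=
      mul_le_mul_of_nonneg_right (one_le_pow₀ (by norm_num)) (by positivity)

theorem ec_pow_four_le_of_fourierSupported {g : (Fin n → Bool) → ℝ} {J : Finset (Fin n)}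
    {k : ℕ} (hg : FourierSupported g J k) :
    EC (fun x => g x ^ 4) ≤ 9 ^ k * EC (fun x => g x ^ 2) ^ 2 := by
  induction J using Finset.induction generalizing g k with
  | empty => exact ec_pow_four_le_of_forall_eq (eq_fourierCoeff_empty_of_fourierSupported hg
      (Or.inl rfl)) k
  | @insert j J hj ih =>
    cases k with
    | zero => exact ec_pow_four_le_of_forall_eq (eq_fourierCoeff_empty_of_fourierSupported hg
        (Or.inr rfl)) 0
    | succ k =>
      rw [ec_pow_four_eq_evenPart_add_oddPart j, ec_sq_eq_evenPart_add_oddPart j]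
      refine bonami_step k (ec_nonneg fun x => sq_nonneg _) (ec_nonneg fun x => sq_nonneg _)
        (ec_nonneg fun x => by positivity) (ec_nonneg fun x => by positivity)
        (ih hg.evenPart) (ih hg.oddPart) (sq_ec_le_ec_mul_ec
          (fun x => by positivity) (fun x => by positivity) fun x => le_of_eq (by ring))

noncomputable def lowDegreePart (k : ℕ) (g : (Fin n → Bool) → ℝ) : (Fin n → Bool) → ℝ :=
  fun x => ∑ S with #S ≤ k, fourierCoeff g S * walsh S x

lemma fourierCoeff_lowDegreePart (k : ℕ) (g : (Fin n → Bool) → ℝ) (T : Finset (Fin n)) :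
    fourierCoeff (lowDegreePart k g) T = if #T ≤ k then fourierCoeff g T else 0 := by
  unfold lowDegreePart
  rw [fourierCoeff_sum_mul_walsh]
  simp only [mem_filter_univ]

lemma fourierSupported_lowDegreePart (k : ℕ) (g : (Fin n → Bool) → ℝ) :
    FourierSupported (lowDegreePart k g) univ k := by
  intro S hS
  rw [fourierCoeff_lowDegreePart] at hS
  exact ⟨subset_univ S, by by_contra h; exact hS (if_neg h)⟩

/-- For the low-degree part `q` of `g`, the weight `W = ‖q‖₂² = ⟨g, q⟩` is bounded through two
Cauchy–Schwarz steps by `(E|g|)^{1/2} (E g²)^{1/4} ‖q‖₄`, and Bonami bounds `‖q‖₄` by `√3ᵏ √W`. -/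
theorem sq_sum_fourierCoeff_sq_le (k : ℕ) (g : (Fin n → Bool) → ℝ) :
    (∑ S with #S ≤ k, fourierCoeff g S ^ 2) ^ 2 ≤
      9 ^ k * EC (fun x => |g x|) ^ 2 * EC (fun x => g x ^ 2) := by
  set q := lowDegreePart k g
  set W := ∑ S with #S ≤ k, fourierCoeff g S ^ 2 with hW_def
  have hcoeff : ∀ S, fourierCoeff g S * fourierCoeff q S = if #S ≤ k then fourierCoeff g S ^ 2
      else 0 := fun S => by
    rw [fourierCoeff_lowDegreePart]; split_ifs <;> ring
  have hgq : EC (fun x => g x * q x) = W := by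
    rw [ec_mul_eq_sum_fourierCoeff, hW_def, sum_filter]
    exact sum_congr rfl fun S _ => hcoeff S
  have hqq : EC (fun x => q x ^ 2) = W := by
    rw [ec_sq_eq_sum_fourierCoeff_sq, hW_def, sum_filter]
    refine sum_congr rfl fun S _ => ?_
    rw [fourierCoeff_lowDegreePart]; split_ifs <;> ring
  have hq4 : EC (fun x => q x ^ 4) ≤ 9 ^ k * W ^ 2 :=
    hqq ▸ ec_pow_four_le_of_fourierSupported (fourierSupported_lowDegreePart k g)
  have h1 : W ≤ EC (fun x => |g x| * |q x|) :=
    hgq ▸ ec_mono fun x => (le_abs_self _).trans (abs_mul _ _).le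
  have h2 : EC (fun x => |g x| * |q x|) ^ 2 ≤
      EC (fun x => |g x|) * EC (fun x => |g x| * q x ^ 2) :=
    sq_ec_le_ec_mul_ec (fun x => abs_nonneg _) (fun x => by positivity)
      fun x => le_of_eq (by rw [← sq_abs (q x)]; ring)
  have h3 : EC (fun x => |g x| * q x ^ 2) ^ 2 ≤ EC (fun x => g x ^ 2) * EC (fun x => q x ^ 4) :=
    sq_ec_le_ec_mul_ec (fun x => sq_nonneg _) (fun x => by positivity)
      fun x => le_of_eq (by rw [← sq_abs (g x)]; ring)
  have hW : 0 ≤ W := sum_nonneg fun S _ => sq_nonneg _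
  rcases hW.eq_or_lt with hW0 | hWpos
  · rw [← hW0, zero_pow two_ne_zero]
    exact mul_nonneg (by positivity) (ec_nonneg fun x => sq_nonneg _)
  refine le_of_mul_le_mul_right ?_ (pow_pos hWpos 2)
  calc W ^ 2 * W ^ 2 = (W ^ 2) ^ 2 := by ring
    _ ≤ (EC (fun x => |g x|) * EC (fun x => |g x| * q x ^ 2)) ^ 2 :=
      pow_le_pow_left₀ (sq_nonneg W) ((pow_le_pow_left₀ hW h1 2).trans h2) 2
    _ = EC (fun x => |g x|) ^ 2 * EC (fun x => |g x| * q x ^ 2) ^ 2 := by ring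
    _ ≤ EC (fun x => |g x|) ^ 2 * (EC (fun x => g x ^ 2) * (9 ^ k * W ^ 2)) := by
      gcongr
      exact h3.trans (mul_le_mul_of_nonneg_left hq4 (ec_nonneg fun x => sq_nonneg _))
    _ = 9 ^ k * EC (fun x => |g x|) ^ 2 * EC (fun x => g x ^ 2) * W ^ 2 := by ring

lemma sum_sum_filter_mem {α : Type*} [Fintype α] [DecidableEq α] (A : Finset (Finset α))
    (F : Finset α → ℝ) :
    ∑ i, ∑ S ∈ A with i ∈ S, F S = ∑ S ∈ A, #S * F S := by
  rw [sum_comm' (t' := A) (s' := fun S => S) (by simp [and_comm])]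
  simp

lemma sum_offDiag_sum_filter {α : Type*} [Fintype α] [DecidableEq α] (F : Finset α → ℝ) :
    ∑ p ∈ (univ : Finset α).offDiag, ∑ S with p.1 ∈ S ∧ p.2 ∈ S, F S =
      ∑ S, #S.offDiag * F S := by
  rw [sum_comm' (t' := univ) (s' := fun S => S.offDiag) fun p S => by
    simp only [mem_offDiag, mem_univ, true_and, mem_filter]
    tauto]
  simp

lemma three_pow_ceil_log_div_le {x : ℝ} (hx : 1 ≤ x) :
    (3 : ℝ) ^ ⌈log x / 20⌉₊ ≤ 3 * x ^ (1 / 10 : ℝ) := by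
  have hlog : 0 ≤ log x / 20 := div_nonneg (log_nonneg hx) (by norm_num)
  have hlog3 : log 3 ≤ 2 := by linarith [log_le_sub_one_of_pos (by norm_num : (0 : ℝ) < 3)]
  calc (3 : ℝ) ^ ⌈log x / 20⌉₊ = 3 ^ (⌈log x / 20⌉₊ : ℝ) := (rpow_natCast 3 _).symm
    _ ≤ 3 ^ (log x / 20 + 1) :=
      rpow_le_rpow_of_exponent_le (by norm_num) (Nat.ceil_lt_add_one hlog).le
    _ = 3 * x ^ (log 3 / 20) := by
      rw [rpow_add (by norm_num), rpow_one, rpow_def_of_pos (by norm_num),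
        rpow_def_of_pos (by linarith)]
      ring_nf
    _ ≤ 3 * x ^ (1 / 10 : ℝ) :=
      mul_le_mul_of_nonneg_left (rpow_le_rpow_of_exponent_le hx (by linarith)) (by norm_num)

lemma log_sq_le_ceil {x : ℝ} (hx : 0 ≤ log x) :
    log x ^ 2 ≤ 400 * (⌈log x / 20⌉₊ * (⌈log x / 20⌉₊ + 1)) := by
  have h := Nat.le_ceil (log x / 20)
  nlinarith

lemma le_of_le_rpow_mul_rpow {V α N : ℝ} (hV₀ : 0 ≤ V) (hV₁ : V ≤ 1) (hα : 0 ≤ α) (hN : 0 < N)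
    (h : V ≤ N ^ (11 / 10 : ℝ) * α ^ (3 / 2 : ℝ)) :
    1 / 1000 * V ^ (11 / 15 : ℝ) * (1 / N) ^ (11 / 15 : ℝ) ≤ α := by
  refine (rpow_le_rpow_iff (by positivity) hα (by norm_num : (0 : ℝ) < 3 / 2)).1 ?_
  calc (1 / 1000 * V ^ (11 / 15 : ℝ) * (1 / N) ^ (11 / 15 : ℝ)) ^ (3 / 2 : ℝ)
      = (1 / 1000) ^ (3 / 2 : ℝ) * V ^ (11 / 10 : ℝ) / N ^ (11 / 10 : ℝ) := by
        rw [mul_rpow (by positivity) (by positivity), mul_rpow (by positivity) (by positivity),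
          ← rpow_mul hV₀, ← rpow_mul (by positivity), div_rpow zero_le_one hN.le, one_rpow]
        norm_num
        ring
    _ ≤ 1 * V / N ^ (11 / 10 : ℝ) := by
        gcongr
        · exact rpow_le_one (by norm_num) (by norm_num) (by norm_num)
        · exact rpow_le_self_of_le_one hV₀ hV₁ (by norm_num)
    _ ≤ α ^ (3 / 2 : ℝ) := by
        rw [one_mul, div_le_iff₀' (by positivity)]
        exact h

section Boolean

variable {f : (Fin n → Bool) → ℝ}

lemma D_sq_eq_abs (hf : ∀ x, f x = 0 ∨ f x = 1) (i : Fin n) (x : Fin n → Bool) :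
    D i f x ^ 2 = |D i f x| := by
  rw [D]
  rcases hf (cubeFlip i x) with h | h <;> rcases hf x with h' | h' <;> norm_num [h, h']

lemma abs_D_le_one (hf : ∀ x, f x = 0 ∨ f x = 1) (i : Fin n) (x : Fin n → Bool) :
    |D i f x| ≤ 1 := by
  rw [D]
  rcases hf (cubeFlip i x) with h | h <;> rcases hf x with h' | h' <;> norm_num [h, h']

lemma influence_eq_ec_abs (i : Fin n) (f : (Fin n → Bool) → ℝ) :
    influence i f = EC (fun x => |D i f x|) :=
  normC_one _

lemma influence_nonneg (i : Fin n) (f : (Fin n → Bool) → ℝ) : 0 ≤ influence i f :=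
  (influence_eq_ec_abs i f).symm ▸ ec_nonneg fun _ => abs_nonneg _

lemma varC_le_one (hf : ∀ x, f x = 0 ∨ f x = 1) : varC f ≤ 1 := by
  have hsq : (fun x => f x ^ 2) = f := funext fun x => by rcases hf x with h | h <;> simp [h]
  have hle : EC f ≤ 1 :=
    (ec_mono fun x => by rcases hf x with h | h <;> simp [h]).trans (ec_const 1).le
  have h₀ : 0 ≤ EC f := ec_nonneg fun x => by rcases hf x with h | h <;> simp [h]
  rw [varC, hsq]
  nlinarith

theorem sq_four_mul_sum_fourierCoeff_sq_le (hf : ∀ x, f x = 0 ∨ f x = 1) (i : Fin n) (k : ℕ) :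
    (4 * ∑ S with #S ≤ k ∧ i ∈ S, fourierCoeff f S ^ 2) ^ 2 ≤ 9 ^ k * influence i f ^ 3 := by
  have hweight : ∑ S with #S ≤ k, fourierCoeff (D i f) S ^ 2 =
      4 * ∑ S with #S ≤ k ∧ i ∈ S, fourierCoeff f S ^ 2 := by
    simp only [sum_filter, mul_sum, fourierCoeff_D]
    refine sum_congr rfl fun S _ => ?_
    split_ifs <;> first | tauto | ring
  have hsq : EC (fun x => D i f x ^ 2) = influence i f := by
    simp only [D_sq_eq_abs hf, influence_eq_ec_abs]
  have := sq_sum_fourierCoeff_sq_le k (D i f)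
  rwa [hweight, ← influence_eq_ec_abs, hsq, mul_assoc, ← pow_succ] at this

theorem four_mul_sum_fourierCoeff_sq_le_influence2 (hf : ∀ x, f x = 0 ∨ f x = 1) (i j : Fin n) :
    4 * ∑ S with i ∈ S ∧ j ∈ S, fourierCoeff f S ^ 2 ≤ influence2 i j f := by
  have hparseval : EC (fun x => D i (D j f) x ^ 2) =
      16 * ∑ S with i ∈ S ∧ j ∈ S, fourierCoeff f S ^ 2 := by
    rw [ec_sq_eq_sum_fourierCoeff_sq, mul_sum, sum_filter]
    refine sum_congr rfl fun S _ => ?_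
    rw [fourierCoeff_D_D]
    split_ifs <;> ring
  -- `|Dᵢ Dⱼ f| ≤ 2` turns the `L²` bound of Parseval into an `L¹` bound
  have hpointwise : ∀ x, D i (D j f) x ^ 2 ≤ 2 * |D i (D j f) x| := fun x => by
    have h2 : |D i (D j f) x| ≤ 2 := by
      rw [D]
      linarith [abs_sub (D j f (cubeFlip i x)) (D j f x), abs_D_le_one hf j (cubeFlip i x),
        abs_D_le_one hf j x]
    rw [← sq_abs]
    nlinarith [abs_nonneg (D i (D j f) x)]
  have := ec_mono hpointwise
  rw [hparseval, ec_const_mul, ← normC_one] at this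
  rw [influence2]
  linarith

lemma sum_low_levels_le (hf : ∀ x, f x = 0 ∨ f x = 1) (d : ℕ) {α : ℝ}
    (hα : ∀ i, influence i f ≤ α) :
    ∑ S ∈ univ.erase ∅ with #S ≤ d, fourierCoeff f S ^ 2 ≤
      n * (3 ^ d * α ^ (3 / 2 : ℝ)) / 4 := by
  have hcoord : ∀ i, ∑ S with #S ≤ d ∧ i ∈ S, fourierCoeff f S ^ 2 ≤
      3 ^ d * α ^ (3 / 2 : ℝ) / 4 := fun i => by
    have hα₀ : 0 ≤ α := (influence_nonneg i f).trans (hα i)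
    have hpow : (3 ^ d * α ^ (3 / 2 : ℝ)) ^ 2 = 9 ^ d * α ^ 3 := by
      rw [mul_pow, ← rpow_natCast (α ^ _), ← rpow_mul hα₀, ← pow_mul, mul_comm d, pow_mul]
      norm_num
    have := (sq_four_mul_sum_fourierCoeff_sq_le hf i d).trans
      (mul_le_mul_of_nonneg_left (pow_le_pow_left₀ (influence_nonneg i f) (hα i) 3)
        (by positivity))
    rw [← hpow] at this
    have := abs_le_of_sq_le_sq' this (by positivity)
    linarith
  calc ∑ S ∈ univ.erase ∅ with #S ≤ d, fourierCoeff f S ^ 2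
      ≤ ∑ S ∈ univ.erase ∅ with #S ≤ d, #S * fourierCoeff f S ^ 2 :=
        sum_le_sum fun S hS => le_mul_of_one_le_left (sq_nonneg _) <| by
          have hS : S ≠ ∅ := ne_of_mem_erase (mem_filter.1 hS).1
          exact_mod_cast card_pos.2 (nonempty_iff_ne_empty.2 hS)
    _ = ∑ S with #S ≤ d, #S * fourierCoeff f S ^ 2 := by
        rw [filter_erase, sum_erase _ (by simp)]
    _ = ∑ i, ∑ S with #S ≤ d ∧ i ∈ S, fourierCoeff f S ^ 2 := by
        rw [← sum_sum_filter_mem]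
        exact sum_congr rfl fun i _ => by rw [filter_filter]
    _ ≤ ∑ _i : Fin n, 3 ^ d * α ^ (3 / 2 : ℝ) / 4 := sum_le_sum fun i _ => hcoord i
    _ = n * (3 ^ d * α ^ (3 / 2 : ℝ)) / 4 := by simp [mul_div_assoc]

lemma sum_high_levels_le (hf : ∀ x, f x = 0 ∨ f x = 1) (d : ℕ) {β : ℝ} (hβ₀ : 0 ≤ β)
    (hβ : ∀ i j, i ≠ j → influence2 i j f ≤ β) :
    d * (d + 1) * ∑ S with d < #S, fourierCoeff f S ^ 2 ≤ n ^ 2 * β / 4 := by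
  calc d * (d + 1) * ∑ S with d < #S, fourierCoeff f S ^ 2
      ≤ ∑ S with d < #S, #S.offDiag * fourierCoeff f S ^ 2 := by
        rw [mul_sum]
        refine sum_le_sum fun S hS => mul_le_mul_of_nonneg_right ?_ (sq_nonneg _)
        have hdS : d < #S := (mem_filter.1 hS).2
        rw [offDiag_card]
        exact_mod_cast Nat.le_sub_of_add_le (by nlinarith)
    _ ≤ ∑ S, #S.offDiag * fourierCoeff f S ^ 2 :=
        sum_le_sum_of_subset_of_nonneg (filter_subset _ _) fun S _ _ => by positivity
    _ = ∑ p ∈ (univ : Finset (Fin n)).offDiag,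
          ∑ S with p.1 ∈ S ∧ p.2 ∈ S, fourierCoeff f S ^ 2 := by
        rw [sum_offDiag_sum_filter]
    _ ≤ ∑ _p ∈ (univ : Finset (Fin n)).offDiag, β / 4 := sum_le_sum fun p hp => by
        have := four_mul_sum_fourierCoeff_sq_le_influence2 hf p.1 p.2
        linarith [hβ p.1 p.2 (mem_offDiag.1 hp).2.2]
    _ ≤ n ^ 2 * β / 4 := by
        rw [sum_const, nsmul_eq_mul, offDiag_card, card_univ, Fintype.card_fin, mul_div_assoc]
        exact mul_le_mul_of_nonneg_right
          (by exact_mod_cast (Nat.sub_le _ _).trans_eq (sq n).symm) (by positivity)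

theorem varC_le (hf : ∀ x, f x = 0 ∨ f x = 1) {d : ℕ} (hd : 0 < d) {α β : ℝ}
    (hα : ∀ i, influence i f ≤ α) (hβ₀ : 0 ≤ β) (hβ : ∀ i j, i ≠ j → influence2 i j f ≤ β) :
    varC f ≤ n * (3 ^ d * α ^ (3 / 2 : ℝ)) / 4 + n ^ 2 * β / (4 * (d * (d + 1))) := by
  rw [varC_eq_sum_fourierCoeff_sq, ← sum_filter_add_sum_filter_not _ (fun S => #S ≤ d)]
  gcongr
  · exact sum_low_levels_le hf d hα
  · have hsub : ∑ S ∈ univ.erase ∅ with ¬#S ≤ d, fourierCoeff f S ^ 2 ≤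
        ∑ S with d < #S, fourierCoeff f S ^ 2 :=
      sum_le_sum_of_subset_of_nonneg
        (fun S hS => mem_filter.2 ⟨mem_univ S, not_le.1 (mem_filter.1 hS).2⟩)
        fun _ _ _ => sq_nonneg _
    have hd' : (0 : ℝ) < d * (d + 1) := by positivity
    rw [le_div_iff₀ (by positivity)]
    nlinarith [sum_high_levels_le hf d hβ₀ hβ, mul_le_mul_of_nonneg_left hsub hd'.le]

theorem varC_le_of_influence2_le (hf : ∀ x, f x = 0 ∨ f x = 1) (hn : 2 ≤ n) {α : ℝ}
    (hα : ∀ i, influence i f ≤ α)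
    (hpair : ∀ i j, i ≠ j → influence2 i j f ≤ 1 / 1000 * varC f * (log n / n) ^ 2) :
    varC f ≤ n ^ (11 / 10 : ℝ) * α ^ (3 / 2 : ℝ) := by
  have hn₀ : (0 : ℝ) < n := by positivity
  have hlog : 0 < log n := log_pos (by exact_mod_cast hn)
  -- with `d ≈ log n / 20`, `3ᵈ ≤ 3 n^{1/10}` and the pair term of `varC_le` is `≤ varC f / 10`
  set d := ⌈log n / 20⌉₊
  have hvar := varC_le hf (Nat.ceil_pos.2 (by positivity) : 0 < d) hα
    (by have := varC_nonneg f; positivity) hpair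
  have hhigh : n ^ 2 * (1 / 1000 * varC f * (log n / n) ^ 2) / (4 * (d * (d + 1))) ≤
      varC f / 10 := by
    rw [div_le_iff₀ (by positivity), show (n : ℝ) ^ 2 * (1 / 1000 * varC f * (log n / n) ^ 2)
      = 1 / 1000 * varC f * log n ^ 2 by field_simp]
    nlinarith [log_sq_le_ceil hlog.le, varC_nonneg f]
  have hα₀ : 0 ≤ α ^ (3 / 2 : ℝ) := rpow_nonneg ((influence_nonneg ⟨0, by omega⟩ f).trans (hα _)) _
  have hlow : (n : ℝ) * (3 ^ d * α ^ (3 / 2 : ℝ)) / 4 ≤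
      3 / 4 * (n ^ (11 / 10 : ℝ) * α ^ (3 / 2 : ℝ)) := by
    rw [show (11 / 10 : ℝ) = 1 + 1 / 10 by norm_num, rpow_add hn₀, rpow_one]
    have h3 := three_pow_ceil_log_div_le (x := n) (by exact_mod_cast (by omega : 1 ≤ n))
    nlinarith [mul_le_mul_of_nonneg_left (mul_le_mul_of_nonneg_right h3 hα₀) hn₀.le]
  nlinarith [varC_nonneg f]

end Boolean

end KKL

open KKL

/-- KKL-type alternative at order two: either some coordinate has influence at least
`c · Var(f)^{1/(1+η)} · (1/n)^{1/(1+η)}`, or some couple of distinct coordinates has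
influence at least `c · Var(f) · (log n / n)²`. -/
theorem kkl_order_two :
    ∃ c : ℝ, 0 < c ∧ ∃ η : ℝ, 0 < η ∧ η < 1 ∧
      ∀ n : ℕ, 2 ≤ n → ∀ f : (Fin n → Bool) → ℝ,
        (∀ x, f x = 0 ∨ f x = 1) →
        (∃ i : Fin n,
          c * (varC f) ^ (1 / (1 + η)) * ((1 : ℝ) / n) ^ (1 / (1 + η)) ≤ influence i f) ∨
        (∃ i j : Fin n, i ≠ j ∧
          c * varC f * (Real.log n / n) ^ 2 ≤ influence2 i j f) := by
  refine ⟨1 / 1000, by norm_num, 4 / 11, by norm_num, by norm_num, fun n hn f hf => ?_⟩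
  by_cases hpair : ∃ i j : Fin n, i ≠ j ∧
      1 / 1000 * varC f * (Real.log n / n) ^ 2 ≤ influence2 i j f
  · exact Or.inr hpair
  push Not at hpair
  obtain ⟨i₀, -, hmax⟩ := Finset.exists_max_image Finset.univ (influence · f)
    ⟨⟨0, by omega⟩, Finset.mem_univ _⟩
  refine Or.inl ⟨i₀, ?_⟩
  rw [show (1 : ℝ) / (1 + 4 / 11) = 11 / 15 by norm_num]
  exact le_of_le_rpow_mul_rpow (varC_nonneg f) (varC_le_one hf) (influence_nonneg _ _)
    (by positivity) (varC_le_of_influence2_le hf hn (fun i => hmax i (Finset.mem_univ i))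
      fun i j h => (hpair i j h).le)
end
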